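/- arXiv:2306.01462 — 9 statements merged into one kernel-verified Lean document; each statement's English description precedes it below -/
import Mathlib

section
/- For every natural number k, (1/(2π)²) ∫₀^{2π} ∫₀^{2π} (3 + 2(cos u + cos v + cos(u+v)))^k du dv = a_k. -/
open Real

/-- `a k` is the sum of squared multinomial coefficients over all triples
`(k₁,k₂,k₃)` of natural numbers with `k₁+k₂+k₃ = k`. -/
def a (k : ℕ) : ℕ :=
  ∑ p ∈ Finset.Nat.antidiagonalTuple 3 k, (Nat.multinomial Finset.univ p) ^ 2

lemma int_exp (n : ℤ) : ∫ x in (0:ℝ)..(2*π), Complex.exp (n * x * Complex.I)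
    = if n = 0 then ((2*π : ℝ) : ℂ) else 0 := by
  split_ifs with h
  · subst h; simp
  · have hc : (n : ℂ) * Complex.I ≠ 0 := by
      simp only [mul_ne_zero_iff, Complex.I_ne_zero, and_true, ne_eq, Int.cast_eq_zero]
      simpa using h
    have h2 := integral_exp_mul_complex (a := (0:ℝ)) (b := 2*π) hc
    have heq : (fun x : ℝ => Complex.exp ((n:ℂ) * x * Complex.I))
        = fun x : ℝ => Complex.exp ((n:ℂ) * Complex.I * x) := funext fun x => by ring_nf
    rw [heq, h2]
    have : (n : ℂ) * Complex.I * (2*π : ℝ) = n * (2 * π * Complex.I) := by push_cast; ring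
    rw [this, Complex.exp_int_mul_two_pi_mul_I]
    simp

lemma int_exp2 (m n : ℕ) :
    (∫ x in (0:ℝ)..(2*π), Complex.exp ((((m:ℤ):ℂ) - ((n:ℤ):ℂ)) * x * Complex.I))
      = if (m:ℤ) - (n:ℤ) = 0 then ((2*π:ℝ):ℂ) else 0 := by
  have h : (((m:ℤ):ℂ) - ((n:ℤ):ℂ)) = ((((m:ℤ) - (n:ℤ)):ℤ):ℂ) := by push_cast; ring
  rw [h, int_exp]

lemma prod_eq (u v : ℝ) :
    (1 + Complex.exp ((u:ℂ) * Complex.I) + Complex.exp ((-v:ℝ) * Complex.I)) *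
      (1 + Complex.exp ((-u:ℝ) * Complex.I) + Complex.exp ((v:ℂ) * Complex.I))
    = ((3 + 2*(Real.cos u + Real.cos v + Real.cos (u+v)) : ℝ) : ℂ) := by
  have hu := Real.sin_sq_add_cos_sq u
  have hv := Real.sin_sq_add_cos_sq v
  have hu' : (Complex.sin u)^2 + (Complex.cos u)^2 = 1 := by exact_mod_cast congrArg (Complex.ofReal ·) hu
  have hv' : (Complex.sin v)^2 + (Complex.cos v)^2 = 1 := by exact_mod_cast congrArg (Complex.ofReal ·) hv
  simp only [Complex.exp_mul_I, Complex.ofReal_neg, Complex.cos_neg, Complex.sin_neg]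
  push_cast
  rw [Complex.cos_add]
  linear_combination (-(Complex.sin u - Complex.sin v)^2) * Complex.I_sq + hu' + hv'

lemma pow_expand (z w : ℂ) (k : ℕ) :
    (1 + Complex.exp z + Complex.exp w) ^ k
      = ∑ p ∈ Finset.Nat.antidiagonalTuple 3 k,
          (Nat.multinomial Finset.univ p : ℂ) *
            (Complex.exp ((p 1 : ℕ) * z) * Complex.exp ((p 2 : ℕ) * w)) := by
  have h1 : (1 + Complex.exp z + Complex.exp w)
      = ∑ i : Fin 3, ![1, Complex.exp z, Complex.exp w] i := by
    simp [Fin.sum_univ_three]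
  rw [h1, Finset.sum_pow_eq_sum_piAntidiag,
    Finset.piAntidiag_univ_fin_eq_antidiagonalTuple]
  refine Finset.sum_congr rfl fun p _ => ?_
  rw [Fin.prod_univ_three]
  simp only [Matrix.cons_val_zero, Matrix.cons_val_one, Matrix.head_cons,
    Matrix.cons_val_two, Matrix.tail_cons, one_pow, one_mul, ← Complex.exp_nat_mul]

lemma expand (k : ℕ) (u v : ℝ) :
    (((3 + 2 * (Real.cos u + Real.cos v + Real.cos (u + v))) ^ k : ℝ) : ℂ)
      = ∑ p ∈ Finset.Nat.antidiagonalTuple 3 k,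
          ∑ q ∈ Finset.Nat.antidiagonalTuple 3 k,
            ((Nat.multinomial Finset.univ p : ℂ) * (Nat.multinomial Finset.univ q : ℂ)) *
              (Complex.exp ((((p 1 : ℤ) - (q 1 : ℤ)) : ℂ) * u * Complex.I) *
               Complex.exp ((((q 2 : ℤ) - (p 2 : ℤ)) : ℂ) * v * Complex.I)) := by
  have hexp : ∀ (m n : ℕ) (w : ℝ),
      Complex.exp ((m:ℂ) * ((w:ℂ) * Complex.I)) * Complex.exp ((n:ℂ) * (((-w:ℝ):ℂ) * Complex.I))
        = Complex.exp ((((m:ℤ) - (n:ℤ)):ℂ) * w * Complex.I) := by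
    intro m n w
    rw [← Complex.exp_add]
    congr 1
    push_cast
    ring
  rw [Complex.ofReal_pow, ← prod_eq, mul_pow, pow_expand ((u:ℂ) * Complex.I) (((-v:ℝ):ℂ) * Complex.I),
    pow_expand (((-u:ℝ):ℂ) * Complex.I) ((v:ℂ) * Complex.I), Finset.sum_mul_sum]
  refine Finset.sum_congr rfl fun p _ => Finset.sum_congr rfl fun q _ => ?_
  have hr : ∀ (Mp Mq E1 E2 E3 E4 : ℂ),
      Mp * (E1 * E2) * (Mq * (E3 * E4)) = Mp * Mq * ((E1 * E3) * (E4 * E2)) := by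
    intros; ring
  rw [hr, hexp, hexp]

lemma complex_integral (k : ℕ) :
    (∫ u in (0:ℝ)..(2*π), ∫ v in (0:ℝ)..(2*π),
        (((3 + 2 * (Real.cos u + Real.cos v + Real.cos (u + v))) ^ k : ℝ) : ℂ))
      = ((2*π:ℝ):ℂ)^2 * (a k : ℂ) := by
  simp only [expand]
  have inner : ∀ u : ℝ,
      (∫ v in (0:ℝ)..(2*π), ∑ p ∈ Finset.Nat.antidiagonalTuple 3 k,
          ∑ q ∈ Finset.Nat.antidiagonalTuple 3 k,
            ((Nat.multinomial Finset.univ p : ℂ) * (Nat.multinomial Finset.univ q : ℂ)) *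
              (Complex.exp ((((p 1 : ℤ) - (q 1 : ℤ)) : ℂ) * u * Complex.I) *
               Complex.exp ((((q 2 : ℤ) - (p 2 : ℤ)) : ℂ) * v * Complex.I)))
        = ∑ p ∈ Finset.Nat.antidiagonalTuple 3 k,
            ∑ q ∈ Finset.Nat.antidiagonalTuple 3 k,
              (((Nat.multinomial Finset.univ p : ℂ) * (Nat.multinomial Finset.univ q : ℂ)) *
                Complex.exp ((((p 1 : ℤ) - (q 1 : ℤ)) : ℂ) * u * Complex.I)) *
                (if ((q 2 : ℤ) - (p 2 : ℤ)) = 0 then ((2*π:ℝ):ℂ) else 0) := by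
    intro u
    rw [intervalIntegral.integral_finset_sum]
    · refine Finset.sum_congr rfl fun p _ => ?_
      rw [intervalIntegral.integral_finset_sum]
      · refine Finset.sum_congr rfl fun q _ => ?_
        simp only [← mul_assoc]
        rw [intervalIntegral.integral_const_mul, int_exp2]
      · intro q _
        apply Continuous.intervalIntegrable
        fun_prop
    · intro p _
      apply Continuous.intervalIntegrable
      apply continuous_finset_sum
      intro q _
      fun_prop
  simp only [inner]
  rw [intervalIntegral.integral_finset_sum]
  · rw [Finset.sum_congr rfl (fun p _ => intervalIntegral.integral_finset_sum
      (fun q _ => by apply Continuous.intervalIntegrable; fun_prop))]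
    have step : ∀ p q : Fin 3 → ℕ,
        (∫ u in (0:ℝ)..(2*π),
          (((Nat.multinomial Finset.univ p : ℂ) * (Nat.multinomial Finset.univ q : ℂ)) *
            Complex.exp ((((p 1 : ℤ) - (q 1 : ℤ)) : ℂ) * u * Complex.I)) *
            (if ((q 2 : ℤ) - (p 2 : ℤ)) = 0 then ((2*π:ℝ):ℂ) else 0))
        = (((Nat.multinomial Finset.univ p : ℂ) * (Nat.multinomial Finset.univ q : ℂ)) *
            (if ((q 2 : ℤ) - (p 2 : ℤ)) = 0 then ((2*π:ℝ):ℂ) else 0)) *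
            (if ((p 1 : ℤ) - (q 1 : ℤ)) = 0 then ((2*π:ℝ):ℂ) else 0) := by
      intro p q
      have hfe : (fun u : ℝ =>
          (((Nat.multinomial Finset.univ p : ℂ) * (Nat.multinomial Finset.univ q : ℂ)) *
            Complex.exp ((((p 1 : ℤ) - (q 1 : ℤ)) : ℂ) * u * Complex.I)) *
            (if ((q 2 : ℤ) - (p 2 : ℤ)) = 0 then ((2*π:ℝ):ℂ) else 0))
          = fun u : ℝ =>
            (((Nat.multinomial Finset.univ p : ℂ) * (Nat.multinomial Finset.univ q : ℂ)) *
              (if ((q 2 : ℤ) - (p 2 : ℤ)) = 0 then ((2*π:ℝ):ℂ) else 0)) *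
              Complex.exp ((((p 1 : ℤ) - (q 1 : ℤ)) : ℂ) * u * Complex.I) := by
        funext u; ring
      rw [hfe, intervalIntegral.integral_const_mul, int_exp2]
    simp only [step]
    -- evaluate the double sum
    rw [show ((2*π:ℝ):ℂ)^2 * (a k : ℂ)
        = ∑ p ∈ Finset.Nat.antidiagonalTuple 3 k,
            ((Nat.multinomial Finset.univ p : ℂ))^2 * ((2*π:ℝ):ℂ) * ((2*π:ℝ):ℂ) from by
      rw [a]; push_cast; rw [Finset.mul_sum]; refine Finset.sum_congr rfl fun p _ => by ring]
    refine Finset.sum_congr rfl fun p hp => ?_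
    rw [Finset.sum_eq_single p]
    · rw [sub_self, sub_self, if_pos rfl]
      push_cast
      ring
    · intro q hq hne
      by_cases h1 : ((p 1 : ℤ) - (q 1 : ℤ)) = 0
      · by_cases h2 : ((q 2 : ℤ) - (p 2 : ℤ)) = 0
        · exfalso
          apply hne
          have e1 : p 1 = q 1 := by omega
          have e2 : p 2 = q 2 := by omega
          rw [Finset.Nat.mem_antidiagonalTuple] at hp hq
          rw [Fin.sum_univ_three] at hp hq
          have e0 : p 0 = q 0 := by omega
          funext i
          fin_cases i <;>
            first | exact e0.symm | exact e1.symm | exact e2.symm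
        · simp [h2]
      · simp [h1]
    · intro h; exact absurd hp h
  · intro p _
    apply Continuous.intervalIntegrable
    apply continuous_finset_sum
    intro q _
    fun_prop

theorem double_integral_eq_a (k : ℕ) :
    (1 / (2 * π) ^ 2) *
      (∫ u in (0:ℝ)..(2 * π), ∫ v in (0:ℝ)..(2 * π),
        (3 + 2 * (Real.cos u + Real.cos v + Real.cos (u + v))) ^ k) = a k := by
  have hcast : (((∫ u in (0:ℝ)..(2*π), ∫ v in (0:ℝ)..(2*π),
        (3 + 2 * (Real.cos u + Real.cos v + Real.cos (u + v))) ^ k) : ℝ) : ℂ)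
      = ((2*π:ℝ):ℂ)^2 * (a k : ℂ) := by
    rw [← complex_integral k, ← intervalIntegral.integral_ofReal]
    exact intervalIntegral.integral_congr fun u _ =>
      (intervalIntegral.integral_ofReal ..).symm
  have h2 : (∫ u in (0:ℝ)..(2*π), ∫ v in (0:ℝ)..(2*π),
        (3 + 2 * (Real.cos u + Real.cos v + Real.cos (u + v))) ^ k)
      = (2*π)^2 * (a k : ℝ) := by
    rw [show ((2*π:ℝ):ℂ)^2 * (a k:ℂ) = (((2*π)^2 * (a k:ℝ) : ℝ) : ℂ) by push_cast; ring] at hcast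
    exact_mod_cast hcast
  rw [h2]
  have hπ : ((2*π:ℝ))^2 ≠ 0 := by positivity
  field_simp
end

section
/- For every natural number k, a_k = ∑_{n=0}^{k} C(k,n)² · C(2n,n), where C(m,j) denotes the binomial coefficient. -/
open Finset

namespace Finset.Nat

@[to_additive]
theorem prod_antidiagonalTuple_succ {M : Type*} [CommMonoid M] (k n : ℕ)
    (f : (Fin (k + 1) → ℕ) → M) :
    ∏ p ∈ antidiagonalTuple (k + 1) n, f p =
      ∏ ij ∈ antidiagonal n, ∏ q ∈ antidiagonalTuple k ij.2, f (Fin.cons ij.1 q) := by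
  rw [prod_sigma']
  refine prod_nbij' (fun p => ⟨(p 0, n - p 0), Fin.tail p⟩) (fun q => Fin.cons q.1.1 q.2)
    ?_ ?_ ?_ ?_ ?_
  · intro p hp
    simp_all only [mem_sigma, HasAntidiagonal.mem_antidiagonal, mem_antidiagonalTuple,
      Fin.sum_univ_succ, Fin.tail]
    omega
  · rintro ⟨⟨i, j⟩, q⟩ hq
    simp_all [mem_antidiagonalTuple, Fin.sum_univ_succ]
  · intro p _
    simp
  · rintro ⟨⟨i, j⟩, q⟩ hq
    simp_all only [mem_sigma, HasAntidiagonal.mem_antidiagonal, mem_antidiagonalTuple,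
      Fin.cons_zero, Fin.tail_cons, Sigma.mk.injEq, Prod.mk.injEq, true_and, heq_eq_eq, and_true]
    omega
  · intro p _
    simp

end Finset.Nat

namespace Nat

theorem multinomial_univ_cons {k : ℕ} (a : ℕ) (q : Fin k → ℕ) :
    multinomial univ (Fin.cons a q : Fin (k + 1) → ℕ) =
      (a + ∑ i, q i).choose a * multinomial univ q := by
  rw [Fin.univ_succ, multinomial_cons]
  simp [multinomial, sum_map, prod_map]

theorem sum_antidiagonalTuple_succ_multinomial_pow (k n r : ℕ) :
    ∑ p ∈ Finset.Nat.antidiagonalTuple (k + 1) n, multinomial univ p ^ r =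
      ∑ ij ∈ antidiagonal n, n.choose ij.1 ^ r *
        ∑ q ∈ Finset.Nat.antidiagonalTuple k ij.2, multinomial univ q ^ r := by
  rw [Finset.Nat.sum_antidiagonalTuple_succ]
  refine sum_congr rfl fun ij hij => ?_
  rw [mul_sum]
  refine sum_congr rfl fun q hq => ?_
  rw [HasAntidiagonal.mem_antidiagonal] at hij
  rw [Finset.Nat.mem_antidiagonalTuple] at hq
  rw [multinomial_univ_cons, hq, hij, mul_pow]

theorem sum_antidiagonal_choose_sq (n : ℕ) :
    ∑ ij ∈ antidiagonal n, n.choose ij.1 ^ 2 = (2 * n).choose n := by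
  rw [← sum_range_choose_sq, Finset.Nat.sum_antidiagonal_eq_sum_range_succ_mk]

theorem sum_antidiagonalTuple_two_multinomial_sq (n : ℕ) :
    ∑ q ∈ Finset.Nat.antidiagonalTuple 2 n, multinomial univ q ^ 2 = (2 * n).choose n := by
  simp [sum_antidiagonalTuple_succ_multinomial_pow, sum_antidiagonal_choose_sq]

end Nat

theorem a_eq_sum_choose_sq_mul_centralBinom (k : ℕ) :
    a k = ∑ n ∈ Finset.range (k + 1), (Nat.choose k n) ^ 2 * Nat.choose (2 * n) n := by
  calc a k = ∑ ij ∈ antidiagonal k, k.choose ij.1 ^ 2 * (2 * ij.2).choose ij.2 := by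
        simp only [a, Nat.sum_antidiagonalTuple_succ_multinomial_pow 2,
          Nat.sum_antidiagonalTuple_two_multinomial_sq]
    _ = ∑ ij ∈ antidiagonal k, k.choose ij.2 ^ 2 * (2 * ij.1).choose ij.1 :=
        (Finset.Nat.sum_antidiagonal_swap (f := fun ij => _)).symm
    _ = ∑ n ∈ range (k + 1), k.choose (k - n) ^ 2 * (2 * n).choose n :=
        Finset.Nat.sum_antidiagonal_eq_sum_range_succ
          (fun i j => k.choose j ^ 2 * (2 * i).choose i) k
    _ = _ := sum_congr rfl fun n hn => by
        rw [Nat.choose_symm (Nat.le_of_lt_succ (mem_range.mp hn))]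
end

section
/- For every real number x, ∑_{k=0}^∞ a_k · x^k/k! = ∫₀^∞ g(x·t)³ · e^{−t} dt; in particular the series on the left converges and the integrand on the right is integrable on (0,∞). -/
open MeasureTheory Real

/-- The entire function `g(y) = ∑ y^k/(k!)²`, so that `g(y) = I₀(2√y)` for `y ≥ 0`. -/
noncomputable def g (y : ℝ) : ℝ := ∑' k : ℕ, y ^ k / ((Nat.factorial k : ℝ)) ^ 2

/-!
Multiplying out three copies of the series of `g` and grouping by total degree gives
`g(y)³ = ∑ₖ aₖ yᵏ / (k!)²`, because `∏ᵢ 1 / (kᵢ!)² = multinomial(k₁,k₂,k₃)² / (k!)²`.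
Integrating termwise against `e^{-t}` on `(0,∞)` turns `tᵏ` into `k!`. The interchange is
justified since `aₖ ≤ (∑ multinomials)² = 9ᵏ`, so that `∑ aₖ |x|ᵏ / k!` converges.
-/

open Filter Set Nat

namespace MeasureTheory

variable {α E ι : Type*} [MeasurableSpace α] {μ : Measure α} [NormedAddCommGroup E] [Countable ι]
  {F : ι → α → E} {f : α → E}

theorem integrable_of_hasSum_of_summable_integral_norm
    (hF_int : ∀ i, Integrable (F i) μ) (hF_sum : Summable fun i ↦ ∫ a, ‖F i a‖ ∂μ)
    (hf : ∀ᵐ a ∂μ, HasSum (F · a) (f a)) : Integrable f μ := by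
  refine ⟨aestronglyMeasurable_of_tendsto_ae atTop
    (fun s ↦ s.aestronglyMeasurable_fun_sum fun i _ ↦ (hF_int i).1) hf, ?_⟩
  have h_enorm : ∀ᵐ a ∂μ, ‖f a‖ₑ ≤ ∑' i, ‖F i a‖ₑ :=
    hf.mono fun a ha ↦ ha.tsum_eq ▸ enorm_tsum_le_tsum_enorm
  calc ∫⁻ a, ‖f a‖ₑ ∂μ ≤ ∫⁻ a, ∑' i, ‖F i a‖ₑ ∂μ := lintegral_mono_ae h_enorm
    _ = ∑' i, ENNReal.ofReal (∫ a, ‖F i a‖ ∂μ) := by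
      rw [lintegral_tsum fun i ↦ (hF_int i).1.enorm]
      simp_rw [ofReal_integral_norm_eq_lintegral_enorm (hF_int _)]
    _ = ENNReal.ofReal (∑' i, ∫ a, ‖F i a‖ ∂μ) :=
      (ENNReal.ofReal_tsum_of_nonneg (fun i ↦ integral_nonneg fun a ↦ norm_nonneg _) hF_sum).symm
    _ < ⊤ := ENNReal.ofReal_lt_top

theorem hasSum_integral_of_hasSum_of_summable_integral_norm [NormedSpace ℝ E]
    (hF_int : ∀ i, Integrable (F i) μ) (hF_sum : Summable fun i ↦ ∫ a, ‖F i a‖ ∂μ)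
    (hf : ∀ᵐ a ∂μ, HasSum (F · a) (f a)) : HasSum (fun i ↦ ∫ a, F i a ∂μ) (∫ a, f a ∂μ) := by
  rw [integral_congr_ae (hf.mono fun a ha ↦ ha.tsum_eq.symm)]
  exact hasSum_integral_of_summable_integral_norm hF_int hF_sum

end MeasureTheory

section FinProd

variable {R ι : Type*} [NormedCommRing R]

theorem summable_norm_prod_of_summable_norm {m : ℕ} {f : Fin m → ι → R}
    (hf : ∀ i, Summable fun n ↦ ‖f i n‖) : Summable fun p : Fin m → ι ↦ ‖∏ i, f i (p i)‖ := by
  induction m with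
  | zero => exact .of_finite
  | succ m ih =>
    rw [← (Fin.consEquiv fun _ ↦ ι).summable_iff]
    simpa [Function.comp_def, Fin.prod_univ_succ] using (hf 0).mul_norm (ih fun i ↦ hf i.succ)

theorem hasSum_prod_of_summable_norm [CompleteSpace R] {m : ℕ} {f : Fin m → ι → R}
    (hf : ∀ i, Summable fun n ↦ ‖f i n‖) :
    HasSum (fun p : Fin m → ι ↦ ∏ i, f i (p i)) (∏ i, ∑' n, f i n) := by
  induction m with
  | zero => simp
  | succ m ih =>
    -- the factors are stated separately: elaborating them inside `HasSum.mul` times out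
    have h_head : Summable fun n ↦ ‖f 0 n‖ := hf 0
    have h_tail : Summable fun p : Fin m → ι ↦ ‖∏ i, f i.succ (p i)‖ :=
      summable_norm_prod_of_summable_norm fun i ↦ hf i.succ
    have h_tail_hasSum := ih (f := fun i ↦ f i.succ) fun i ↦ hf i.succ
    have h_mul := summable_mul_of_summable_norm h_head h_tail
    have h := h_head.of_norm.hasSum.mul h_tail_hasSum h_mul
    rw [← (Fin.consEquiv fun _ ↦ ι).hasSum_iff, Fin.prod_univ_succ]
    simpa [Function.comp_def, Fin.prod_univ_succ] using h

end FinProd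

theorem summable_norm_pow_div_factorial_sq (y : ℝ) :
    Summable fun n : ℕ ↦ ‖y ^ n / (n ! : ℝ) ^ 2‖ := by
  refine .of_nonneg_of_le (fun _ ↦ norm_nonneg _) (fun n ↦ ?_) (Real.summable_pow_div_factorial |y|)
  have h_fact : (1 : ℝ) ≤ n ! := mod_cast n.factorial_pos
  rw [norm_div, norm_pow, Real.norm_eq_abs, norm_pow, RCLike.norm_natCast]
  gcongr
  nlinarith

theorem prod_pow_div_factorial_sq {ι : Type*} (s : Finset ι) (p : ι → ℕ) (y : ℝ) :
    ∏ i ∈ s, y ^ p i / ((p i)! : ℝ) ^ 2 =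
      (multinomial s p : ℝ) ^ 2 / ((∑ i ∈ s, p i)! : ℝ) ^ 2 * y ^ ∑ i ∈ s, p i := by
  have h_spec : ((∏ i ∈ s, (p i)! : ℕ) : ℝ) * multinomial s p = (∑ i ∈ s, p i)! :=
    mod_cast multinomial_spec s p
  have h_prod : ((∏ i ∈ s, (p i)! : ℕ) : ℝ) ≠ 0 := by positivity
  have h_multinomial : (multinomial s p : ℝ) ≠ 0 := mod_cast (multinomial_pos s p).ne'
  rw [← h_spec, Finset.prod_div_distrib, Finset.prod_pow_eq_pow_sum, Finset.prod_pow]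
  push_cast at h_prod ⊢
  field_simp

theorem hasSum_g_cube (y : ℝ) :
    HasSum (fun k ↦ (a k : ℝ) / (k ! : ℝ) ^ 2 * y ^ k) (g y ^ 3) := by
  have h := hasSum_prod_of_summable_norm (m := 3) (f := fun _ n ↦ y ^ n / (n ! : ℝ) ^ 2)
    fun _ ↦ summable_norm_pow_div_factorial_sq y
  simp only [Finset.prod_const, Finset.card_univ, Fintype.card_fin] at h
  rw [← (Finset.Nat.sigmaAntidiagonalTupleEquivTuple 3).hasSum_iff] at h
  refine h.sigma fun k ↦ ?_
  suffices ∑ p ∈ Finset.Nat.antidiagonalTuple 3 k, ∏ i, y ^ p i / ((p i)! : ℝ) ^ 2 =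
      (a k : ℝ) / (k ! : ℝ) ^ 2 * y ^ k by
    rw [← this, ← Finset.sum_coe_sort]
    exact hasSum_fintype _
  rw [a, Nat.cast_sum, Finset.sum_div, Finset.sum_mul]
  refine Finset.sum_congr rfl fun p hp ↦ ?_
  rw [prod_pow_div_factorial_sq, Finset.Nat.mem_antidiagonalTuple.1 hp]
  push_cast
  ring

theorem a_le_nine_pow (k : ℕ) : a k ≤ 9 ^ k := by
  -- the multinomial theorem for `(1 + 1 + 1) ^ k`
  have h_sum : ∑ p ∈ Finset.Nat.antidiagonalTuple 3 k, multinomial Finset.univ p = 3 ^ k := by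
    simpa [← Finset.piAntidiag_univ_fin_eq_antidiagonalTuple] using
      (Finset.sum_pow_eq_sum_piAntidiag (Finset.univ : Finset (Fin 3)) (fun _ ↦ (1 : ℕ)) k).symm
  calc a k ≤ (∑ p ∈ Finset.Nat.antidiagonalTuple 3 k, multinomial Finset.univ p) ^ 2 :=
        Finset.sum_sq_le_sq_sum_of_nonneg fun _ _ ↦ Nat.zero_le _
    _ = 9 ^ k := by rw [h_sum, ← pow_mul, mul_comm, pow_mul]; norm_num

theorem summable_a_mul_pow_div_factorial (x : ℝ) :
    Summable fun k ↦ (a k : ℝ) * |x| ^ k / k ! := by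
  refine .of_nonneg_of_le (fun _ ↦ by positivity) (fun k ↦ ?_)
    (Real.summable_pow_div_factorial (9 * |x|))
  rw [mul_pow]
  gcongr
  exact_mod_cast a_le_nine_pow k

theorem integrableOn_pow_mul_exp_neg (n : ℕ) :
    IntegrableOn (fun t : ℝ ↦ t ^ n * exp (-t)) (Ioi 0) := by
  refine (Real.GammaIntegral_convergent (s := n + 1) (by positivity)).congr_fun
    (fun t _ ↦ ?_) measurableSet_Ioi
  simp [Real.rpow_natCast, mul_comm]

theorem integral_pow_mul_exp_neg (n : ℕ) : ∫ t in Ioi (0 : ℝ), t ^ n * exp (-t) = n ! := by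
  rw [← Real.Gamma_nat_eq_factorial, Real.Gamma_eq_integral (by positivity)]
  refine setIntegral_congr_fun measurableSet_Ioi fun t _ ↦ ?_
  simp [Real.rpow_natCast, mul_comm]

theorem integral_norm_const_mul_pow_mul_exp_neg (c : ℝ) (n : ℕ) :
    ∫ t in Ioi (0 : ℝ), ‖c * (t ^ n * exp (-t))‖ = |c| * n ! := by
  calc ∫ t in Ioi (0 : ℝ), ‖c * (t ^ n * exp (-t))‖
      = ∫ t in Ioi (0 : ℝ), |c| * (t ^ n * exp (-t)) :=
        setIntegral_congr_fun measurableSet_Ioi fun t (ht : 0 < t) ↦ by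
          rw [norm_mul, norm_of_nonneg (by positivity : 0 ≤ t ^ n * exp (-t)), Real.norm_eq_abs]
    _ = |c| * n ! := by rw [integral_const_mul, integral_pow_mul_exp_neg]

/-- Exponential generating function of `a`: the series `∑ a_k x^k/k!` converges and
equals `∫₀^∞ I₀³(2√(xt)) e^{-t} dt`; in particular the integrand is integrable on `(0,∞)`. -/
theorem egf_a_eq_integral (x : ℝ) :
    IntegrableOn (fun t : ℝ => g (x * t) ^ 3 * Real.exp (-t)) (Set.Ioi 0) volume ∧
    HasSum (fun k : ℕ => (a k : ℝ) * x ^ k / (Nat.factorial k : ℝ))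
      (∫ t in Set.Ioi (0:ℝ), g (x * t) ^ 3 * Real.exp (-t)) := by
  set c : ℕ → ℝ := fun k ↦ (a k : ℝ) / (k ! : ℝ) ^ 2 * x ^ k with hc
  have h_int k : IntegrableOn (fun t ↦ c k * (t ^ k * exp (-t))) (Ioi 0) :=
    (integrableOn_pow_mul_exp_neg k).const_mul _
  have h_hasSum t : HasSum (fun k ↦ c k * (t ^ k * exp (-t))) (g (x * t) ^ 3 * exp (-t)) := by
    have h_eq : (fun k ↦ c k * (t ^ k * exp (-t))) =
        fun k ↦ (a k : ℝ) / (k ! : ℝ) ^ 2 * (x * t) ^ k * exp (-t) := by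
      ext k
      rw [hc]
      ring
    exact h_eq ▸ (hasSum_g_cube (x * t)).mul_right (exp (-t))
  have h_sum : Summable fun k ↦ ∫ t in Ioi (0 : ℝ), ‖c k * (t ^ k * exp (-t))‖ := by
    refine (summable_a_mul_pow_div_factorial x).congr fun k ↦ ?_
    rw [integral_norm_const_mul_pow_mul_exp_neg, hc, abs_mul, abs_div, abs_pow, abs_pow,
      Nat.abs_cast, Nat.abs_cast]
    field_simp
  have h_integral k : ∫ t in Ioi (0 : ℝ), c k * (t ^ k * exp (-t)) = a k * x ^ k / k ! := by
    rw [integral_const_mul, integral_pow_mul_exp_neg, hc]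
    field_simp
  refine ⟨integrable_of_hasSum_of_summable_integral_norm h_int h_sum (.of_forall h_hasSum), ?_⟩
  simpa only [h_integral] using
    hasSum_integral_of_hasSum_of_summable_integral_norm h_int h_sum (.of_forall h_hasSum)
end

section
/- The function S : ℝ → ℝ defined by S(x) := I₀(2x)³ + 2·∑_{n=1}^∞ I_n(2x)³ (equal to ∑_{n∈ℤ} I_n(2x)³ since I_{−n} = I_n) is three times differentiable and is annihilated by the third-order differential operator A_x = x²D³ − (x²−3x)D² − (24x²+2x−1)D − (36x²+24x); i.e., for all x ∈ ℝ: x²·S'''(x) − (x²−3x)·S''(x) − (24x²+2x−1)·S'(x) − (36x²+24x)·S(x) = 0. -/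
open Real

/-- The modified Bessel function of the first kind of (natural) order `n`,
`I_n(x) = ∑_{k=0}^∞ (x/2)^{2k+n} / (k!·(k+n)!)`. -/
noncomputable def besselI (n : ℕ) (x : ℝ) : ℝ :=
  ∑' k : ℕ, (x / 2) ^ (2 * k + n) / ((Nat.factorial k : ℝ) * (Nat.factorial (k + n) : ℝ))

/-- `S(x) = ∑_{n∈ℤ} I_n(2x)³ = I₀(2x)³ + 2∑_{n≥1} I_n(2x)³` (using `I_{-n} = I_n`). -/
noncomputable def S (x : ℝ) : ℝ :=
  besselI 0 (2 * x) ^ 3 + 2 * ∑' n : ℕ, besselI (n + 1) (2 * x) ^ 3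

/-!
Put `Z n x = I_{|n|}(2x)` for `n : ℤ`. Differentiating the series termwise and shifting the
summation index gives `(Z n)' = Z (n - 1) + Z (n + 1)` and `x (Z (n - 1) - Z (n + 1)) = n Z n`.
The sums `C(a, b, c) = ∑ₙ Z (n + a) Z (n + b) Z (n + c)` depend only on the multiset `{a, b, c}`
up to translation and reflection, and they are closed under differentiation. Applying the
recurrence to two of the three factors gives linear relations between them in which the weight
`n` cancels. As `S = C(0, 0, 0)`, its first three derivatives are combinations of six such sums,
and the differential expression vanishes modulo three of these relations.
-/

open scoped Nat

theorem hasDerivAt_tsum_of_abs_le {ι : Type*} {f f' : ι → ℝ → ℝ}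
    (hf : ∀ i y, HasDerivAt (f i) (f' i y) y)
    (hf' : ∀ R, ∃ u : ι → ℝ, Summable u ∧ ∀ i y, |y| ≤ R → |f' i y| ≤ u i)
    {x : ℝ} (hx : Summable fun i => f i x) :
    HasDerivAt (fun y => ∑' i, f i y) (∑' i, f' i x) x := by
  obtain ⟨u, hu, hbound⟩ := hf' (|x| + 1)
  have hmem : x ∈ Metric.ball (0 : ℝ) (|x| + 1) := by simp
  refine hasDerivAt_tsum_of_isPreconnected hu Metric.isOpen_ball
    (convex_ball 0 _).isPreconnected (fun i y _ => hf i y) (fun i y hy => ?_) hmem hx hmem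
  rw [mem_ball_zero_iff] at hy
  exact hbound i y hy.le

noncomputable def besselITerm (m k : ℕ) (x : ℝ) : ℝ := (x / 2) ^ (2 * k + m) / (k ! * (k + m) !)

noncomputable def besselITermPred (m : ℕ) : ℕ → ℝ → ℝ
  | 0 => fun _ => 0
  | k + 1 => besselITerm m k

theorem abs_besselITerm_le (m k : ℕ) (x : ℝ) :
    |besselITerm m k x| ≤ |x / 2| ^ m / m ! * (((x / 2) ^ 2) ^ k / k !) := by
  have hfact : (m ! : ℝ) ≤ (k + m) ! := by exact_mod_cast Nat.factorial_le (Nat.le_add_left m k)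
  have hpow : |x / 2| ^ (2 * k + m) = |x / 2| ^ m * ((x / 2) ^ 2) ^ k := by
    rw [← sq_abs, ← pow_mul, ← pow_add, add_comm]
  unfold besselITerm
  rw [abs_div, abs_pow, abs_of_pos (by positivity : (0 : ℝ) < k ! * (k + m) !), hpow]
  rw [div_mul_div_comm, mul_comm (m ! : ℝ)]
  gcongr

theorem abs_besselITerm_le_of_abs_le {m k : ℕ} {x R : ℝ} (h : |x| ≤ R) :
    |besselITerm m k x| ≤ besselITerm m k R := by
  unfold besselITerm
  rw [abs_div, abs_pow, abs_of_pos (by positivity : (0 : ℝ) < k ! * (k + m) !), abs_div,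
    abs_two]
  gcongr

theorem summable_besselITerm (m : ℕ) (x : ℝ) : Summable fun k => besselITerm m k x :=
  .of_norm_bounded ((Real.summable_pow_div_factorial _).mul_left _)
    fun k => (Real.norm_eq_abs _).trans_le (abs_besselITerm_le m k x)

theorem abs_besselI_le (m : ℕ) (x : ℝ) :
    |besselI m x| ≤ |x / 2| ^ m / m ! * exp ((x / 2) ^ 2) := by
  refine tsum_of_norm_bounded ?_
    fun k => (Real.norm_eq_abs _).trans_le (abs_besselITerm_le m k x)
  have hexp : HasSum (fun k : ℕ => ((x / 2) ^ 2) ^ k / k !) (exp ((x / 2) ^ 2)) := by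
    rw [exp_eq_exp_ℝ]
    exact NormedSpace.expSeries_div_hasSum_exp _
  exact hexp.mul_left _

theorem hasSum_besselITermPred (m : ℕ) (x : ℝ) :
    HasSum (fun k => besselITermPred m k x) (besselI m x) := by
  refine (hasSum_nat_add_iff' 1).mp ?_
  simp only [besselITermPred, Finset.range_one, Finset.sum_singleton, sub_zero]
  exact (summable_besselITerm m x).hasSum

theorem abs_besselITermPred_le_of_abs_le {m k : ℕ} {x R : ℝ} (h : |x| ≤ R) :
    |besselITermPred m k x| ≤ besselITermPred m k R := by
  cases k with
  | zero => simp [besselITermPred]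
  | succ k => exact abs_besselITerm_le_of_abs_le h

theorem hasDerivAt_half_pow_div (p : ℕ) (c x : ℝ) :
    HasDerivAt (fun y => (y / 2) ^ (p + 1) / c) ((p + 1) / 2 * (x / 2) ^ p / c) x := by
  refine ((((hasDerivAt_id x).div_const 2).pow (p + 1)).div_const c).congr_deriv ?_
  simp only [id, Nat.add_sub_cancel]
  push_cast
  ring

theorem hasDerivAt_besselITerm_zero (k : ℕ) (x : ℝ) :
    HasDerivAt (besselITerm 0 k) (besselITermPred 1 k x) x := by
  cases k with
  | zero =>
    have hconst : besselITerm 0 0 = fun _ => 1 := by funext y; simp [besselITerm]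
    rw [hconst]
    exact hasDerivAt_const x 1
  | succ k =>
    refine (hasDerivAt_half_pow_div (2 * k + 1) _ x).congr_deriv ?_
    simp only [besselITermPred, besselITerm, Nat.factorial_succ]
    push_cast
    field_simp
    ring

theorem hasDerivAt_besselITerm_succ (m k : ℕ) (x : ℝ) :
    HasDerivAt (besselITerm (m + 1) k)
      ((besselITerm m k x + besselITermPred (m + 2) k x) / 2) x := by
  refine (hasDerivAt_half_pow_div (2 * k + m) _ x).congr_deriv ?_
  cases k with
  | zero =>
    simp only [besselITermPred, besselITerm, Nat.zero_add, Nat.factorial_succ]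
    push_cast
    field_simp
    ring
  | succ k =>
    simp only [besselITermPred, besselITerm, Nat.add_right_comm _ 1 m, ← add_assoc,
      Nat.factorial_succ]
    push_cast
    field_simp
    ring

theorem hasDerivAt_besselI_zero (x : ℝ) : HasDerivAt (besselI 0) (besselI 1 x) x := by
  have h := hasDerivAt_tsum_of_abs_le (f' := besselITermPred 1) hasDerivAt_besselITerm_zero
    (fun R => ⟨_, (hasSum_besselITermPred 1 R).summable,
      fun _ _ hy => abs_besselITermPred_le_of_abs_le hy⟩) (summable_besselITerm 0 x)
  rwa [(hasSum_besselITermPred 1 x).tsum_eq] at h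

theorem hasDerivAt_besselI_succ (m : ℕ) (x : ℝ) :
    HasDerivAt (besselI (m + 1)) ((besselI m x + besselI (m + 2) x) / 2) x := by
  have hsum (y : ℝ) := ((summable_besselITerm m y).hasSum.add
    (hasSum_besselITermPred (m + 2) y)).div_const 2
  have h := hasDerivAt_tsum_of_abs_le (hasDerivAt_besselITerm_succ m)
    (fun R => ⟨_, (hsum R).summable, fun _ _ hy => ?_⟩) (summable_besselITerm (m + 1) x)
  · rwa [(hsum x).tsum_eq] at h
  · rw [abs_div, abs_two]
    gcongr
    exact (abs_add_le _ _).trans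
      (add_le_add (abs_besselITerm_le_of_abs_le hy) (abs_besselITermPred_le_of_abs_le hy))

theorem besselITerm_recurrence (m k : ℕ) (x : ℝ) :
    x * besselITerm m k x - x * besselITermPred (m + 2) k x =
      2 * (m + 1) * besselITerm (m + 1) k x := by
  cases k with
  | zero =>
    simp only [besselITermPred, besselITerm, Nat.zero_add, Nat.factorial_succ]
    push_cast
    field_simp
    ring
  | succ k =>
    simp only [besselITermPred, besselITerm, Nat.add_right_comm _ 1 m, ← add_assoc,
      Nat.factorial_succ]
    push_cast
    field_simp
    ring

theorem besselI_recurrence (m : ℕ) (x : ℝ) :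
    x * (besselI m x - besselI (m + 2) x) = 2 * (m + 1) * besselI (m + 1) x := by
  have h := ((summable_besselITerm m x).hasSum.mul_left x).sub
    ((hasSum_besselITermPred (m + 2) x).mul_left x)
  simp only [besselITerm_recurrence] at h
  rw [mul_sub]
  exact h.unique ((summable_besselITerm (m + 1) x).hasSum.mul_left _)

noncomputable def besselIDouble (n : ℤ) (x : ℝ) : ℝ := besselI n.natAbs (2 * x)

@[simp]
theorem besselIDouble_neg (n : ℤ) : besselIDouble (-n) = besselIDouble n := by
  funext x
  simp [besselIDouble]

theorem hasDerivAt_besselIDouble_natCast (m : ℕ) (x : ℝ) :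
    HasDerivAt (besselIDouble m) (besselIDouble (m - 1) x + besselIDouble (m + 1) x) x := by
  have hlin : HasDerivAt (fun y : ℝ => 2 * y) 2 x := by
    simpa using (hasDerivAt_id x).const_mul (2 : ℝ)
  cases m with
  | zero =>
    refine ((hasDerivAt_besselI_zero (2 * x)).comp x hlin).congr_deriv ?_
    simp [besselIDouble]
    ring
  | succ j =>
    refine ((hasDerivAt_besselI_succ j (2 * x)).comp x hlin).congr_deriv ?_
    have e : ((j : ℤ) + 1 + 1).natAbs = j + 2 := by omega
    simp only [besselIDouble, Nat.cast_add, Nat.cast_one, add_sub_cancel_right, e,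
      Int.natAbs_natCast]
    ring

theorem hasDerivAt_besselIDouble (n : ℤ) (x : ℝ) :
    HasDerivAt (besselIDouble n) (besselIDouble (n - 1) x + besselIDouble (n + 1) x) x := by
  obtain ⟨m, rfl | rfl⟩ := Int.eq_nat_or_neg n
  · exact hasDerivAt_besselIDouble_natCast m x
  · rw [besselIDouble_neg, show -(m : ℤ) - 1 = -(m + 1) by ring,
      show -(m : ℤ) + 1 = -(m - 1) by ring, besselIDouble_neg, besselIDouble_neg, add_comm]
    exact hasDerivAt_besselIDouble_natCast m x

theorem besselIDouble_recurrence (n : ℤ) (x : ℝ) :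
    x * (besselIDouble (n - 1) x - besselIDouble (n + 1) x) = n * besselIDouble n x := by
  have hnat (m : ℕ) :
      x * (besselIDouble (m - 1) x - besselIDouble (m + 1) x) = m * besselIDouble m x := by
    cases m with
    | zero => simp [besselIDouble]
    | succ j =>
      have h := besselI_recurrence j (2 * x)
      have e₁ : ((j : ℤ) + 1).natAbs = j + 1 := by omega
      have e₂ : ((j : ℤ) + 1 + 1).natAbs = j + 2 := by omega
      simp only [besselIDouble, Nat.cast_add, Nat.cast_one, add_sub_cancel_right, e₁, e₂,
        Int.natAbs_natCast]
      linarith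
  obtain ⟨m, rfl | rfl⟩ := Int.eq_nat_or_neg n
  · exact hnat m
  · rw [besselIDouble_neg, show -(m : ℤ) - 1 = -(m + 1) by ring,
      show -(m : ℤ) + 1 = -(m - 1) by ring, besselIDouble_neg, besselIDouble_neg]
    push_cast
    linarith [hnat m]

noncomputable def besselIDoubleBound (R : ℝ) (n : ℤ) : ℝ :=
  exp (R ^ 2) * (R ^ n.natAbs / n.natAbs !)

theorem abs_besselIDouble_le {n : ℤ} {x R : ℝ} (h : |x| ≤ R) :
    |besselIDouble n x| ≤ besselIDoubleBound R n := by
  have hR : 0 ≤ R := (abs_nonneg x).trans h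
  have hx := abs_besselI_le n.natAbs (2 * x)
  rw [mul_div_cancel_left₀ x two_ne_zero] at hx
  have hsq : x ^ 2 ≤ R ^ 2 := sq_le_sq' (abs_le.mp h).1 (abs_le.mp h).2
  calc |besselIDouble n x| ≤ |x| ^ n.natAbs / n.natAbs ! * exp (x ^ 2) := hx
    _ ≤ R ^ n.natAbs / n.natAbs ! * exp (R ^ 2) := by gcongr
    _ = _ := mul_comm _ _

theorem besselIDoubleBound_le_exp {R : ℝ} (hR : 0 ≤ R) (n : ℤ) :
    besselIDoubleBound R n ≤ exp (R ^ 2) * exp R := by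
  unfold besselIDoubleBound
  gcongr
  exact pow_div_factorial_le_exp _ hR _

theorem abs_besselIDouble_le_exp {n : ℤ} {x R : ℝ} (h : |x| ≤ R) :
    |besselIDouble n x| ≤ exp (R ^ 2) * exp R :=
  (abs_besselIDouble_le h).trans (besselIDoubleBound_le_exp ((abs_nonneg x).trans h) n)

theorem abs_mul_mul_le {a b c A B C : ℝ} (ha : |a| ≤ A) (hb : |b| ≤ B) (hc : |c| ≤ C) :
    |a * b * c| ≤ A * B * C := by
  have hA : 0 ≤ A := (abs_nonneg a).trans ha
  have hB : 0 ≤ B := (abs_nonneg b).trans hb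
  rw [abs_mul, abs_mul]
  gcongr

theorem abs_product_rule_le {a a' b b' c c' A A' B B' C C' : ℝ} (ha : |a| ≤ A) (ha' : |a'| ≤ A')
    (hb : |b| ≤ B) (hb' : |b'| ≤ B') (hc : |c| ≤ C) (hc' : |c'| ≤ C') :
    |(a' * b + a * b') * c + a * b * c'| ≤ (A' * B + A * B') * C + A * B * C' := by
  have hA' : 0 ≤ A' := (abs_nonneg a').trans ha'
  have hB' : 0 ≤ B' := (abs_nonneg b').trans hb'
  have hA : 0 ≤ A := (abs_nonneg a).trans ha
  have hB : 0 ≤ B := (abs_nonneg b).trans hb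
  refine (abs_add_le _ _).trans (add_le_add ?_ (abs_mul_mul_le ha hb hc'))
  rw [abs_mul]
  gcongr
  exact (abs_add_le _ _).trans (add_le_add (by rw [abs_mul]; gcongr) (by rw [abs_mul]; gcongr))

theorem summable_besselIDoubleBound (R : ℝ) (s : ℤ) :
    Summable fun n : ℤ => besselIDoubleBound R (n + s) := by
  have h : Summable fun n : ℤ => R ^ n.natAbs / n.natAbs ! :=
    summable_int_iff_summable_nat_and_neg.mpr
      ⟨by simpa using Real.summable_pow_div_factorial R,
        by simpa using Real.summable_pow_div_factorial R⟩
  exact (h.mul_left _).comp_injective (add_left_injective s)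

noncomputable def tripleSum (a b c : ℤ) (x : ℝ) : ℝ :=
  ∑' n : ℤ, besselIDouble (n + a) x * besselIDouble (n + b) x * besselIDouble (n + c) x

theorem summable_tripleSum (a b c : ℤ) (x : ℝ) :
    Summable fun n : ℤ =>
      besselIDouble (n + a) x * besselIDouble (n + b) x * besselIDouble (n + c) x := by
  have hx : |x| ≤ |x| := le_rfl
  refine .of_norm_bounded ((summable_besselIDoubleBound |x| a).mul_right
    ((exp (|x| ^ 2) * exp |x|) * (exp (|x| ^ 2) * exp |x|))) fun n => ?_
  rw [Real.norm_eq_abs, ← mul_assoc]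
  exact abs_mul_mul_le (abs_besselIDouble_le hx) (abs_besselIDouble_le_exp hx)
    (abs_besselIDouble_le_exp hx)

theorem hasDerivAt_tripleSum (a b c : ℤ) (x : ℝ) :
    HasDerivAt (tripleSum a b c)
      (tripleSum (a - 1) b c x + tripleSum (a + 1) b c x + tripleSum a (b - 1) c x +
        tripleSum a (b + 1) c x + tripleSum a b (c - 1) x + tripleSum a b (c + 1) x) x := by
  set Z := besselIDouble
  set Z' : ℤ → ℝ → ℝ := fun m y => Z (m - 1) y + Z (m + 1) y
  have hZ (m : ℤ) (y : ℝ) : HasDerivAt (Z m) (Z' m y) y := hasDerivAt_besselIDouble m y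
  have hderiv := hasDerivAt_tsum_of_abs_le
    (f := fun n y => Z (n + a) y * Z (n + b) y * Z (n + c) y)
    (f' := fun n y => (Z' (n + a) y * Z (n + b) y + Z (n + a) y * Z' (n + b) y) * Z (n + c) y +
      Z (n + a) y * Z (n + b) y * Z' (n + c) y)
    (fun n y => ((hZ _ y).mul (hZ _ y)).mul (hZ _ y)) ?_ (summable_tripleSum a b c x)
  · have hsum := (((((summable_tripleSum (a - 1) b c x).hasSum.add
      (summable_tripleSum (a + 1) b c x).hasSum).add
      (summable_tripleSum a (b - 1) c x).hasSum).add
      (summable_tripleSum a (b + 1) c x).hasSum).add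
      (summable_tripleSum a b (c - 1) x).hasSum).add
      (summable_tripleSum a b (c + 1) x).hasSum
    refine hderiv.congr_deriv (Eq.trans ?_ hsum.tsum_eq)
    congr 1
    funext n
    simp only [Z', add_sub_assoc, add_assoc]
    ring
  · intro R
    set g := besselIDoubleBound R
    have hg := summable_besselIDoubleBound R
    set K := exp (R ^ 2) * exp R
    -- only the first factor has to decay in `n`, the other two are bounded uniformly
    refine ⟨fun n => ((g (n + (a - 1)) + g (n + (a + 1))) * K + g (n + a) * (K + K)) * K +
      g (n + a) * K * (K + K), ?_, fun n y hy => ?_⟩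
    · exact (((((hg (a - 1)).add (hg (a + 1))).mul_right K).add
        ((hg a).mul_right (K + K))).mul_right K).add (((hg a).mul_right K).mul_right (K + K))
    · have hK (m : ℤ) : |Z m y| ≤ K := abs_besselIDouble_le_exp hy
      have hK₂ (m : ℤ) : |Z' m y| ≤ K + K :=
        (abs_add_le _ _).trans (add_le_add (hK _) (hK _))
      have hA : |Z' (n + a) y| ≤ g (n + (a - 1)) + g (n + (a + 1)) := by
        refine (abs_add_le _ _).trans (add_le_add ?_ ?_)
        · rw [add_sub_assoc]; exact abs_besselIDouble_le hy
        · rw [add_assoc]; exact abs_besselIDouble_le hy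
      exact abs_product_rule_le (abs_besselIDouble_le hy) hA (hK _) (hK₂ _) (hK _) (hK₂ _)

theorem tripleSum_eq_of_perm {a b c a' b' c' : ℤ} (h : [a, b, c].Perm [a', b', c']) :
    tripleSum a b c = tripleSum a' b' c' := by
  funext x
  have hprod (a b c : ℤ) (n : ℤ) :
      besselIDouble (n + a) x * besselIDouble (n + b) x * besselIDouble (n + c) x =
        ([a, b, c].map fun s => besselIDouble (n + s) x).prod := by
    simp [mul_assoc]
  simp only [tripleSum, hprod, (h.map _).prod_eq]

theorem tripleSum_add_const (a b c k : ℤ) :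
    tripleSum (a + k) (b + k) (c + k) = tripleSum a b c := by
  funext x
  rw [tripleSum, tripleSum]
  conv_rhs => rw [← (Equiv.addRight k).tsum_eq]
  refine tsum_congr fun n => ?_
  simp only [Equiv.coe_addRight, add_assoc, add_comm k]

theorem tripleSum_neg (a b c : ℤ) : tripleSum (-a) (-b) (-c) = tripleSum a b c := by
  funext x
  rw [tripleSum, tripleSum, ← (Equiv.neg ℤ).tsum_eq]
  refine tsum_congr fun n => ?_
  simp only [Equiv.neg_apply, ← neg_add, besselIDouble_neg]

theorem tripleSum_eq_of_perm_add {a b c a' b' c' : ℤ} (k : ℤ)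
    (h : [a', b', c'].Perm [a + k, b + k, c + k]) : tripleSum a' b' c' = tripleSum a b c := by
  rw [tripleSum_eq_of_perm h, tripleSum_add_const]

theorem tripleSum_eq_of_perm_sub {a b c a' b' c' : ℤ} (k : ℤ)
    (h : [a', b', c'].Perm [k - a, k - b, k - c]) : tripleSum a' b' c' = tripleSum a b c := by
  simp only [sub_eq_neg_add] at h
  rw [tripleSum_eq_of_perm h, tripleSum_add_const, tripleSum_neg]

theorem tripleSum_contiguous (a b c : ℤ) (x : ℝ) :
    x * (tripleSum (a - 1) b c x - tripleSum (a + 1) b c x) -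
      x * (tripleSum a (b - 1) c x - tripleSum a (b + 1) c x) = (a - b) * tripleSum a b c x := by
  set Z := besselIDouble
  have h := (((summable_tripleSum (a - 1) b c x).hasSum.mul_left x).sub
    ((summable_tripleSum (a + 1) b c x).hasSum.mul_left x)).sub
    (((summable_tripleSum a (b - 1) c x).hasSum.mul_left x).sub
    ((summable_tripleSum a (b + 1) c x).hasSum.mul_left x))
  rw [← mul_sub, ← mul_sub] at h
  refine h.unique (((summable_tripleSum a b c x).hasSum.mul_left ((a : ℝ) - b)).congr_fun ?_)
  intro n
  -- the weights `n + a` and `n + b` produced by the recurrence differ by the constant `a - b`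
  have ha := besselIDouble_recurrence (n + a) x
  have hb := besselIDouble_recurrence (n + b) x
  simp only [← add_sub_assoc, ← add_assoc]
  push_cast at ha hb
  linear_combination (Z (n + b) x * Z (n + c) x) * ha - (Z (n + a) x * Z (n + c) x) * hb

theorem S_eq_tripleSum : S = tripleSum 0 0 0 := by
  funext x
  have hcube : tripleSum 0 0 0 x = ∑' n : ℤ, besselIDouble n x ^ 3 := by
    simp only [tripleSum, add_zero, pow_three, mul_assoc]
  have hsum : Summable fun n : ℤ => besselIDouble n x ^ 3 := by
    simpa only [add_zero, pow_three, mul_assoc] using summable_tripleSum 0 0 0 x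
  have heven : Function.Even fun n : ℤ => besselIDouble n x ^ 3 := fun n => by simp
  rw [hcube, tsum_int_eq_zero_add_two_mul_tsum_pnat heven hsum,
    tsum_pnat_eq_tsum_succ (f := fun m : ℕ => besselIDouble m x ^ 3)]
  have hnatAbs (n : ℕ) : ((n : ℤ) + 1).natAbs = n + 1 := by omega
  simp [S, besselIDouble, hnatAbs]

theorem hasDerivAt_tripleSum_000 (x : ℝ) :
    HasDerivAt (tripleSum 0 0 0) (6 * tripleSum 0 0 1 x) x := by
  have e₁ : tripleSum (-1) 0 0 = tripleSum 0 0 1 := tripleSum_eq_of_perm_sub 0 (by decide)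
  have e₂ : tripleSum 1 0 0 = tripleSum 0 0 1 := tripleSum_eq_of_perm (by decide)
  have e₃ : tripleSum 0 (-1) 0 = tripleSum 0 0 1 := tripleSum_eq_of_perm_sub 0 (by decide)
  have e₄ : tripleSum 0 1 0 = tripleSum 0 0 1 := tripleSum_eq_of_perm (by decide)
  have e₅ : tripleSum 0 0 (-1) = tripleSum 0 0 1 := tripleSum_eq_of_perm_sub 0 (by decide)
  convert hasDerivAt_tripleSum 0 0 0 x using 1
  norm_num [e₁, e₂, e₃, e₄, e₅]
  ring

theorem hasDerivAt_tripleSum_001 (x : ℝ) :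
    HasDerivAt (tripleSum 0 0 1)
      (tripleSum 0 0 0 x + 2 * tripleSum 0 0 1 x + 2 * tripleSum 0 1 2 x + tripleSum 0 0 2 x)
      x := by
  have e₁ : tripleSum (-1) 0 1 = tripleSum 0 1 2 := tripleSum_eq_of_perm_add (-1) (by decide)
  have e₂ : tripleSum 1 0 1 = tripleSum 0 0 1 := tripleSum_eq_of_perm_sub 1 (by decide)
  have e₃ : tripleSum 0 (-1) 1 = tripleSum 0 1 2 := tripleSum_eq_of_perm_add (-1) (by decide)
  have e₄ : tripleSum 0 1 1 = tripleSum 0 0 1 := tripleSum_eq_of_perm_sub 1 (by decide)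
  convert hasDerivAt_tripleSum 0 0 1 x using 1
  norm_num [e₁, e₂, e₃, e₄]
  ring

theorem hasDerivAt_tripleSum_012 (x : ℝ) :
    HasDerivAt (tripleSum 0 1 2)
      (2 * tripleSum 0 2 3 x + 2 * tripleSum 0 0 1 x + 2 * tripleSum 0 0 2 x) x := by
  have e₁ : tripleSum (-1) 1 2 = tripleSum 0 2 3 := tripleSum_eq_of_perm_add (-1) (by decide)
  have e₂ : tripleSum 1 1 2 = tripleSum 0 0 1 := tripleSum_eq_of_perm_add 1 (by decide)
  have e₃ : tripleSum 0 2 2 = tripleSum 0 0 2 := tripleSum_eq_of_perm_sub 2 (by decide)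
  have e₄ : tripleSum 0 1 1 = tripleSum 0 0 1 := tripleSum_eq_of_perm_sub 1 (by decide)
  have e₅ : tripleSum 0 1 3 = tripleSum 0 2 3 := tripleSum_eq_of_perm_sub 3 (by decide)
  convert hasDerivAt_tripleSum 0 1 2 x using 1
  norm_num [e₁, e₂, e₃, e₄, e₅]
  ring

theorem hasDerivAt_tripleSum_002 (x : ℝ) :
    HasDerivAt (tripleSum 0 0 2)
      (2 * tripleSum 0 2 3 x + 2 * tripleSum 0 1 2 x + tripleSum 0 0 1 x + tripleSum 0 0 3 x)
      x := by
  have e₁ : tripleSum (-1) 0 2 = tripleSum 0 2 3 := tripleSum_eq_of_perm_sub 2 (by decide)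
  have e₂ : tripleSum 1 0 2 = tripleSum 0 1 2 := tripleSum_eq_of_perm (by decide)
  have e₃ : tripleSum 0 (-1) 2 = tripleSum 0 2 3 := tripleSum_eq_of_perm_sub 2 (by decide)
  convert hasDerivAt_tripleSum 0 0 2 x using 1
  norm_num [e₁, e₂, e₃]
  ring

theorem tripleSum_contiguous_010 (x : ℝ) :
    x * (tripleSum 0 1 2 x - tripleSum 0 0 1 x) - x * (tripleSum 0 0 0 x - tripleSum 0 0 2 x) =
      -tripleSum 0 0 1 x := by
  have e₁ : tripleSum (-1) 1 0 = tripleSum 0 1 2 := tripleSum_eq_of_perm_add (-1) (by decide)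
  have e₂ : tripleSum 1 1 0 = tripleSum 0 0 1 := tripleSum_eq_of_perm_sub 1 (by decide)
  have e₃ : tripleSum 0 2 0 = tripleSum 0 0 2 := tripleSum_eq_of_perm (by decide)
  have e₄ : tripleSum 0 1 0 = tripleSum 0 0 1 := tripleSum_eq_of_perm (by decide)
  have h := tripleSum_contiguous 0 1 0 x
  norm_num [e₁, e₂, e₃, e₄] at h
  exact h

theorem tripleSum_contiguous_021 (x : ℝ) :
    x * (tripleSum 0 2 3 x - tripleSum 0 0 1 x) - x * (tripleSum 0 0 1 x - tripleSum 0 2 3 x) =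
      -2 * tripleSum 0 1 2 x := by
  have e₁ : tripleSum (-1) 2 1 = tripleSum 0 2 3 := tripleSum_eq_of_perm_add (-1) (by decide)
  have e₂ : tripleSum 1 2 1 = tripleSum 0 0 1 := tripleSum_eq_of_perm_add 1 (by decide)
  have e₃ : tripleSum 0 1 1 = tripleSum 0 0 1 := tripleSum_eq_of_perm_sub 1 (by decide)
  have e₄ : tripleSum 0 3 1 = tripleSum 0 2 3 := tripleSum_eq_of_perm_sub 3 (by decide)
  have e₅ : tripleSum 0 2 1 = tripleSum 0 1 2 := tripleSum_eq_of_perm (by decide)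
  have h := tripleSum_contiguous 0 2 1 x
  norm_num [e₁, e₂, e₃, e₄, e₅] at h
  linarith

theorem tripleSum_contiguous_020 (x : ℝ) :
    x * (tripleSum 0 2 3 x - tripleSum 0 1 2 x) - x * (tripleSum 0 0 1 x - tripleSum 0 0 3 x) =
      -2 * tripleSum 0 0 2 x := by
  have e₁ : tripleSum (-1) 2 0 = tripleSum 0 2 3 := tripleSum_eq_of_perm_sub 2 (by decide)
  have e₂ : tripleSum 1 2 0 = tripleSum 0 1 2 := tripleSum_eq_of_perm (by decide)
  have e₃ : tripleSum 0 1 0 = tripleSum 0 0 1 := tripleSum_eq_of_perm (by decide)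
  have e₄ : tripleSum 0 3 0 = tripleSum 0 0 3 := tripleSum_eq_of_perm (by decide)
  have e₅ : tripleSum 0 2 0 = tripleSum 0 0 2 := tripleSum_eq_of_perm (by decide)
  have h := tripleSum_contiguous 0 2 0 x
  norm_num [e₁, e₂, e₃, e₄, e₅] at h
  linarith

/-- `S` is three times differentiable and is annihilated by the operator
`x²D³ − (x²−3x)D² − (24x²+2x−1)D − (36x²+24x)`. -/
theorem sum_besselI_cubed_annihilated :
    Differentiable ℝ S ∧ Differentiable ℝ (deriv S) ∧ Differentiable ℝ (deriv (deriv S)) ∧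
    ∀ x : ℝ,
      x ^ 2 * deriv (deriv (deriv S)) x - (x ^ 2 - 3 * x) * deriv (deriv S) x -
        (24 * x ^ 2 + 2 * x - 1) * deriv S x - (36 * x ^ 2 + 24 * x) * S x = 0 := by
  rw [S_eq_tripleSum]
  set P := tripleSum 0 0 0
  set T := tripleSum 0 0 1
  set R := tripleSum 0 1 2
  set V := tripleSum 0 0 2
  have hP (x : ℝ) : HasDerivAt P (6 * T x) x := hasDerivAt_tripleSum_000 x
  have hP' (x : ℝ) : HasDerivAt (deriv P) (6 * (P x + 2 * T x + 2 * R x + V x)) x := by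
    rw [funext fun y => (hP y).deriv]
    exact (hasDerivAt_tripleSum_001 x).const_mul 6
  have hP'' (x : ℝ) : HasDerivAt (deriv (deriv P)) (6 * (6 * T x +
      2 * (P x + 2 * T x + 2 * R x + V x) + 2 * (2 * tripleSum 0 2 3 x + 2 * T x + 2 * V x) +
      (2 * tripleSum 0 2 3 x + 2 * R x + T x + tripleSum 0 0 3 x))) x := by
    rw [funext fun y => (hP' y).deriv]
    exact ((((hP x).add ((hasDerivAt_tripleSum_001 x).const_mul 2)).add
      ((hasDerivAt_tripleSum_012 x).const_mul 2)).add (hasDerivAt_tripleSum_002 x)).const_mul 6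
  refine ⟨fun x => (hP x).differentiableAt, fun x => (hP' x).differentiableAt,
    fun x => (hP'' x).differentiableAt, fun x => ?_⟩
  rw [(hP x).deriv, (hP' x).deriv, (hP'' x).deriv]
  linear_combination (30 * x + 6) * tripleSum_contiguous_010 x +
    (15 * x) * tripleSum_contiguous_021 x + (6 * x) * tripleSum_contiguous_020 x
end

section
/- The function F : ℝ → ℝ defined for x ≥ 0 by F(x) := ∫₀^∞ e^{−3x−t} · g(x·t)³ dt is three times differentiable on (0,∞) and is annihilated there by the third-order differential operator A_x = x²D³ − (x²−3x)D² − (24x²+2x−1)D − (36x²+24x); i.e., for all x > 0: x²·F'''(x) − (x²−3x)·F''(x) − (24x²+2x−1)·F'(x) − (36x²+24x)·F(x) = 0. -/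
/-!
The Cauchy product gives `g(y)³ = ∑ aₙ yⁿ / (n!)²` with `aₙ = ∑ₖ C(n,k)² C(2k,k)`, and integrating
term by term against `e^{-t}` (each `∫₀^∞ e^{-t} tⁿ dt = n!`) turns `F` into `e^{-3x} ∑ aₙ xⁿ / n!`.
Zeilberger's algorithm produces a telescoping certificate for the recurrence
`(n+2)² aₙ₊₂ = (10n²+30n+23) aₙ₊₁ − 9(n+1)² aₙ`, and this recurrence, together with `a₁ = 3 a₀`,
is precisely the vanishing of the Taylor coefficients of `e^{3x} A_x F`.
-/

open MeasureTheory Real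

/-- `F(x) = ∫₀^∞ e^{−3x−t} I₀³(2√(xt)) dt`. -/
noncomputable def F (x : ℝ) : ℝ :=
  ∫ t in Set.Ioi (0:ℝ), Real.exp (-(3 * x) - t) * g (x * t) ^ 3

open Finset
open scoped Nat

def EntireCoeffs (d : ℕ → ℝ) : Prop := ∀ r : ℝ, 0 ≤ r → Summable fun n => |d n| * r ^ n

noncomputable def psum (d : ℕ → ℝ) (x : ℝ) : ℝ := ∑' n, d n * x ^ n

def derivCoeff (d : ℕ → ℝ) (n : ℕ) : ℝ := (n + 1) * d (n + 1)

def expDerivCoeff (a : ℝ) (d : ℕ → ℝ) (n : ℕ) : ℝ := derivCoeff d n + a * d n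

def shiftCoeff (j : ℕ) (d : ℕ → ℝ) (n : ℕ) : ℝ := if j ≤ n then d (n - j) else 0

def cauchyCoeff (p q : ℕ → ℝ) (n : ℕ) : ℝ := ∑ kl ∈ antidiagonal n, p kl.1 * q kl.2

namespace EntireCoeffs

variable {d p q : ℕ → ℝ}

theorem summable_norm (hd : EntireCoeffs d) (x : ℝ) : Summable fun n => ‖d n * x ^ n‖ := by
  simpa only [norm_mul, norm_pow, Real.norm_eq_abs] using hd |x| (abs_nonneg x)

theorem hasSum (hd : EntireCoeffs d) (x : ℝ) : HasSum (fun n => d n * x ^ n) (psum d x) :=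
  (hd.summable_norm x).of_norm.hasSum

theorem derivCoeff (hd : EntireCoeffs d) : EntireCoeffs (derivCoeff d) := by
  intro r hr
  refine .of_nonneg_of_le (fun n => by positivity) (fun n => ?_)
    ((summable_nat_add_iff 1).2 (hd (2 * r + 1) (by positivity)))
  have hn : ((n : ℝ) + 1) ≤ 2 ^ n := by exact_mod_cast Nat.lt_two_pow_self
  have hpow : ((n : ℝ) + 1) * r ^ n ≤ (2 * r + 1) ^ (n + 1) := calc
    ((n : ℝ) + 1) * r ^ n ≤ 2 ^ n * r ^ n := by gcongr
    _ = (2 * r) ^ n := (mul_pow _ _ _).symm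
    _ ≤ (2 * r + 1) ^ n := by gcongr; linarith
    _ ≤ (2 * r + 1) ^ (n + 1) := pow_le_pow_right₀ (by linarith) n.le_succ
  calc |_root_.derivCoeff d n| * r ^ n = |d (n + 1)| * (((n : ℝ) + 1) * r ^ n) := by
        rw [_root_.derivCoeff, abs_mul, abs_of_nonneg (by positivity : (0 : ℝ) ≤ n + 1)]; ring
    _ ≤ |d (n + 1)| * (2 * r + 1) ^ (n + 1) := by gcongr

theorem expDerivCoeff (hd : EntireCoeffs d) (a : ℝ) : EntireCoeffs (expDerivCoeff a d) := by
  intro r hr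
  refine .of_nonneg_of_le (fun n => by positivity) (fun n => ?_)
    ((hd.derivCoeff r hr).add ((hd r hr).mul_left |a|))
  calc |_root_.expDerivCoeff a d n| * r ^ n
      ≤ (|_root_.derivCoeff d n| + |a| * |d n|) * r ^ n := by
        gcongr; exact (abs_add_le _ _).trans_eq (by rw [abs_mul])
    _ = _ := by ring

theorem cauchyCoeff (hp : EntireCoeffs p) (hq : EntireCoeffs q) :
    EntireCoeffs (cauchyCoeff p q) := by
  intro r hr
  refine (summable_norm_sum_mul_antidiagonal_of_summable_norm
    (hp.summable_norm r) (hq.summable_norm r)).congr fun n => ?_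
  have hsum : ∑ kl ∈ antidiagonal n, p kl.1 * r ^ kl.1 * (q kl.2 * r ^ kl.2)
      = _root_.cauchyCoeff p q n * r ^ n := by
    rw [_root_.cauchyCoeff, sum_mul]
    refine sum_congr rfl fun kl hkl => ?_
    rw [← mem_antidiagonal.1 hkl, pow_add]
    ring
  rw [hsum, Real.norm_eq_abs, abs_mul, abs_of_nonneg (by positivity : 0 ≤ r ^ n)]

theorem psum_mul (hp : EntireCoeffs p) (hq : EntireCoeffs q) (x : ℝ) :
    psum p x * psum q x = psum (_root_.cauchyCoeff p q) x := by
  rw [psum, psum, tsum_mul_tsum_eq_tsum_sum_antidiagonal_of_summable_norm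
    (hp.summable_norm x) (hq.summable_norm x)]
  refine tsum_congr fun n => ?_
  rw [_root_.cauchyCoeff, sum_mul]
  refine sum_congr rfl fun kl hkl => ?_
  rw [← mem_antidiagonal.1 hkl, pow_add]
  ring

theorem hasSum_shiftCoeff (hd : EntireCoeffs d) (j : ℕ) (x : ℝ) :
    HasSum (fun n => shiftCoeff j d n * x ^ n) (x ^ j * psum d x) := by
  rw [← hasSum_nat_add_iff' j]
  have hlow : ∑ i ∈ range j, shiftCoeff j d i * x ^ i = 0 :=
    sum_eq_zero fun i hi => by simp [shiftCoeff, not_le.2 (mem_range.1 hi)]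
  have hterm : (fun n => shiftCoeff j d (n + j) * x ^ (n + j))
      = fun n => x ^ j * (d n * x ^ n) := by
    funext n
    simp only [shiftCoeff, le_add_self, if_true, Nat.add_sub_cancel, pow_add]
    ring
  rw [hlow, sub_zero, hterm]
  exact (hd.hasSum x).mul_left (x ^ j)

theorem hasDerivAt_psum (hd : EntireCoeffs d) (x : ℝ) :
    HasDerivAt (psum d) (psum (_root_.derivCoeff d) x) x := by
  set R := |x| + 1
  have hu : Summable fun n => |d n| * n * R ^ (n - 1) := by
    refine (summable_nat_add_iff 1).1 ((hd.derivCoeff R (by positivity)).congr fun n => ?_)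
    rw [_root_.derivCoeff, abs_mul, abs_of_nonneg (by positivity : (0 : ℝ) ≤ n + 1)]
    push_cast
    ring
  have hsum : HasSum (fun n => d n * (n * x ^ (n - 1))) (psum (_root_.derivCoeff d) x) := by
    rw [← hasSum_nat_add_iff' 1]
    simpa [_root_.derivCoeff, mul_comm, mul_left_comm, mul_assoc] using
      (hd.derivCoeff.hasSum x)
  rw [← hsum.tsum_eq]
  refine hasDerivAt_tsum_of_isPreconnected hu Metric.isOpen_ball
    (convex_ball (0 : ℝ) R).isPreconnected (g := fun n z => d n * z ^ n)
    (fun n y _ => (hasDerivAt_pow n y).const_mul (d n)) (fun n y hy => ?_)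
    (Metric.mem_ball_self (by positivity)) (hd.hasSum 0).summable (by simp [R])
  have hy : |y| ≤ R := by simpa [Real.dist_eq] using (Metric.mem_ball.1 hy).le
  simp only [norm_mul, norm_pow, Real.norm_eq_abs, Nat.abs_cast, ← mul_assoc]
  gcongr

end EntireCoeffs

noncomputable def gCoeff (k : ℕ) : ℝ := ((k ! : ℝ) ^ 2)⁻¹

def sumChooseSqCentralBinom (n : ℕ) : ℕ := ∑ k ∈ range (n + 1), n.choose k ^ 2 * Nat.centralBinom k

theorem g_eq_psum : g = psum gCoeff := by
  funext y
  exact tsum_congr fun k => by rw [gCoeff, div_eq_inv_mul]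

theorem entireCoeffs_gCoeff : EntireCoeffs gCoeff := by
  intro r hr
  refine .of_nonneg_of_le (fun n => by positivity) (fun n => ?_)
    (Real.summable_pow_div_factorial r)
  have hfact : (1 : ℝ) ≤ n ! := by exact_mod_cast n.factorial_pos
  rw [gCoeff, abs_of_nonneg (by positivity), inv_mul_eq_div]
  gcongr
  nlinarith

theorem gCoeff_mul_gCoeff (k l : ℕ) :
    gCoeff k * gCoeff l = ((k + l).choose k : ℝ) ^ 2 / ((k + l) ! : ℝ) ^ 2 := by
  rw [gCoeff, gCoeff, Nat.cast_add_choose]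
  field_simp

theorem sum_antidiagonal_gCoeff_mul (f : ℕ → ℝ) (n : ℕ) :
    ∑ kl ∈ antidiagonal n, f kl.1 * (gCoeff kl.1 * gCoeff kl.2)
      = (∑ k ∈ range (n + 1), (n.choose k : ℝ) ^ 2 * f k) / (n ! : ℝ) ^ 2 := by
  rw [Nat.sum_antidiagonal_eq_sum_range_succ_mk, sum_div]
  refine sum_congr rfl fun k hk => ?_
  rw [gCoeff_mul_gCoeff, Nat.add_sub_of_le (mem_range_succ_iff.1 hk)]
  ring

theorem cauchyCoeff_gCoeff_gCoeff (n : ℕ) :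
    cauchyCoeff gCoeff gCoeff n = (Nat.centralBinom n : ℝ) / (n ! : ℝ) ^ 2 := by
  have h := sum_antidiagonal_gCoeff_mul (fun _ => 1) n
  simp only [one_mul, mul_one] at h
  rw [cauchyCoeff, h, Nat.centralBinom_eq_two_mul_choose, ← Nat.sum_range_choose_sq]
  push_cast
  rfl

theorem cauchyCoeff_cauchyCoeff_gCoeff (n : ℕ) :
    cauchyCoeff (cauchyCoeff gCoeff gCoeff) gCoeff n
      = (sumChooseSqCentralBinom n : ℝ) / (n ! : ℝ) ^ 2 := by
  have h := sum_antidiagonal_gCoeff_mul (fun k => (Nat.centralBinom k : ℝ)) n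
  rw [sumChooseSqCentralBinom]
  push_cast
  rw [← h, cauchyCoeff]
  refine sum_congr rfl fun kl _ => ?_
  rw [cauchyCoeff_gCoeff_gCoeff, div_eq_mul_inv, mul_assoc]
  rfl

theorem g_pow_three (y : ℝ) :
    g y ^ 3 = psum (cauchyCoeff (cauchyCoeff gCoeff gCoeff) gCoeff) y := by
  have h2 := entireCoeffs_gCoeff.cauchyCoeff entireCoeffs_gCoeff
  rw [g_eq_psum, pow_three, ← mul_assoc, entireCoeffs_gCoeff.psum_mul entireCoeffs_gCoeff,
    h2.psum_mul entireCoeffs_gCoeff]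

theorem cast_choose_mul_succ_eq (m k : ℕ) :
    (m.choose k : ℝ) * (m + 1) = ((m + 1).choose k : ℝ) * (m + 1 - k) := by
  rcases le_or_gt k (m + 1) with h | h
  · have h1 := congrArg (Nat.cast : ℕ → ℝ) (Nat.choose_mul_succ_eq m k)
    push_cast [Nat.cast_sub h] at h1
    exact h1
  · rw [Nat.choose_eq_zero_of_lt (by omega), Nat.choose_eq_zero_of_lt h]
    simp

theorem cast_choose_succ_right_eq (m k : ℕ) :
    (m.choose (k + 1) : ℝ) * (k + 1) = (m.choose k : ℝ) * (m - k) := by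
  rcases le_or_gt k m with h | h
  · have h1 := congrArg (Nat.cast : ℕ → ℝ) (Nat.choose_succ_right_eq m k)
    push_cast [Nat.cast_sub h] at h1
    exact h1
  · rw [Nat.choose_eq_zero_of_lt (by omega), Nat.choose_eq_zero_of_lt h]
    simp

def zeilbergerCert (n k : ℕ) : ℝ :=
  (k : ℝ) ^ 3 * (3 * k - 4 * ((n : ℝ) + 2)) * ((n + 2).choose k : ℝ) ^ 2 * Nat.centralBinom k

theorem zeilbergerCert_sub (n k : ℕ) :
    zeilbergerCert n (k + 1) - zeilbergerCert n k
      = ((n : ℝ) + 2) ^ 2 * (((n : ℝ) + 2) ^ 2 * ((n + 2).choose k : ℝ) ^ 2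
          - (10 * (n : ℝ) ^ 2 + 30 * n + 23) * ((n + 1).choose k : ℝ) ^ 2
          + 9 * ((n : ℝ) + 1) ^ 2 * (n.choose k : ℝ) ^ 2) * Nat.centralBinom k := by
  have h0 := cast_choose_mul_succ_eq n k
  have h1 := cast_choose_mul_succ_eq (n + 1) k
  have h2 := cast_choose_succ_right_eq (n + 2) k
  have h3 : ((k : ℝ) + 1) * Nat.centralBinom (k + 1) = 2 * (2 * k + 1) * Nat.centralBinom k := by
    exact_mod_cast Nat.succ_mul_centralBinom_succ k
  simp only [zeilbergerCert]
  push_cast at h1 h2 ⊢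
  set n' : ℝ := (n : ℝ)
  set k' : ℝ := (k : ℝ)
  set A := ((n + 2).choose k : ℝ)
  set A' := ((n + 2).choose (k + 1) : ℝ)
  set b := ((n + 1).choose k : ℝ)
  set c := (n.choose k : ℝ)
  set B := (Nat.centralBinom k : ℝ)
  set B' := (Nat.centralBinom (k + 1) : ℝ)
  linear_combination
    (-9 * B * (n' + 2) ^ 2 * (c * (n' + 1) + b * (n' + 1 - k'))) * h0
    - ((9 * (n' + 1 - k') ^ 2 - (10 * n' ^ 2 + 30 * n' + 23)) * B
        * (b * (n' + 2) + A * (n' + 2 - k'))) * h1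
    + ((3 * k' - 4 * n' - 5) * 2 * (2 * k' + 1) * B * (A' * (k' + 1) + A * (n' + 2 - k'))) * h2
    + ((3 * k' - 4 * n' - 5) * (k' + 1) ^ 2 * A' ^ 2) * h3

theorem cast_sumChooseSqCentralBinom_eq_sum_range {n N : ℕ} (h : n < N) :
    (sumChooseSqCentralBinom n : ℝ)
      = ∑ k ∈ range N, (n.choose k : ℝ) ^ 2 * Nat.centralBinom k := by
  rw [sumChooseSqCentralBinom]
  push_cast
  refine sum_subset (range_subset_range.2 h) fun k _ hk => ?_
  rw [Nat.choose_eq_zero_of_lt (by simpa using hk)]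
  simp

theorem sumChooseSqCentralBinom_recurrence (n : ℕ) :
    ((n : ℝ) + 2) ^ 2 * sumChooseSqCentralBinom (n + 2)
        + 9 * ((n : ℝ) + 1) ^ 2 * sumChooseSqCentralBinom n
      = (10 * (n : ℝ) ^ 2 + 30 * n + 23) * sumChooseSqCentralBinom (n + 1) := by
  have htele : ∑ k ∈ range (n + 3), (zeilbergerCert n (k + 1) - zeilbergerCert n k) = 0 := by
    rw [sum_range_sub]
    simp [zeilbergerCert]
  have hsum : ((n : ℝ) + 2) ^ 2 * (((n : ℝ) + 2) ^ 2 * sumChooseSqCentralBinom (n + 2)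
      - (10 * (n : ℝ) ^ 2 + 30 * n + 23) * sumChooseSqCentralBinom (n + 1)
      + 9 * ((n : ℝ) + 1) ^ 2 * sumChooseSqCentralBinom n) = 0 := by
    rw [← htele, cast_sumChooseSqCentralBinom_eq_sum_range (by omega : n + 2 < n + 3),
      cast_sumChooseSqCentralBinom_eq_sum_range (by omega : n + 1 < n + 3),
      cast_sumChooseSqCentralBinom_eq_sum_range (by omega : n < n + 3), mul_sum, mul_sum, mul_sum,
      ← sum_sub_distrib, ← sum_add_distrib, mul_sum]
    exact sum_congr rfl fun k _ => by rw [zeilbergerCert_sub]; ring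
  linear_combination (mul_eq_zero.1 hsum).resolve_left (by positivity)

noncomputable def egfCoeff (n : ℕ) : ℝ := sumChooseSqCentralBinom n / n !

theorem egfCoeff_one : egfCoeff 1 = 3 * egfCoeff 0 := by
  norm_num [egfCoeff, sumChooseSqCentralBinom, sum_range_succ, Nat.centralBinom]

theorem egfCoeff_recurrence (n : ℕ) :
    ((n : ℝ) + 2) ^ 3 * egfCoeff (n + 2) + 9 * ((n : ℝ) + 1) * egfCoeff n
      = (10 * (n : ℝ) ^ 2 + 30 * n + 23) * egfCoeff (n + 1) := by
  have h := sumChooseSqCentralBinom_recurrence n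
  simp only [egfCoeff, Nat.factorial_succ]
  push_cast
  field_simp
  linear_combination ((n : ℝ) + 2) * h

theorem sumChooseSqCentralBinom_le (n : ℕ) : sumChooseSqCentralBinom n ≤ 16 ^ n := calc
  sumChooseSqCentralBinom n ≤ ∑ k ∈ range (n + 1), n.choose k ^ 2 * 4 ^ n :=
    sum_le_sum fun k hk => Nat.mul_le_mul_left _ ((Nat.centralBinom_le_four_pow k).trans
      (Nat.pow_le_pow_right (by norm_num) (mem_range_succ_iff.1 hk)))
  _ = Nat.centralBinom n * 4 ^ n := by
    rw [← sum_mul, Nat.sum_range_choose_sq, Nat.centralBinom_eq_two_mul_choose]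
  _ ≤ 4 ^ n * 4 ^ n := Nat.mul_le_mul_right _ (Nat.centralBinom_le_four_pow n)
  _ = 16 ^ n := by rw [← mul_pow]; norm_num

theorem entireCoeffs_egfCoeff : EntireCoeffs egfCoeff := by
  intro r hr
  refine .of_nonneg_of_le (fun n => by positivity) (fun n => ?_)
    (Real.summable_pow_div_factorial (16 * r))
  have hle : (sumChooseSqCentralBinom n : ℝ) ≤ 16 ^ n := by
    exact_mod_cast sumChooseSqCentralBinom_le n
  rw [egfCoeff, abs_of_nonneg (by positivity), mul_pow, div_mul_eq_mul_div]
  gcongr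

theorem integrableOn_exp_neg_mul_pow (n : ℕ) :
    IntegrableOn (fun t : ℝ => exp (-t) * t ^ n) (Set.Ioi 0) := by
  simpa [Real.rpow_natCast] using Real.GammaIntegral_convergent (s := (n : ℝ) + 1) (by positivity)

theorem integral_exp_neg_mul_pow (n : ℕ) : ∫ t in Set.Ioi (0 : ℝ), exp (-t) * t ^ n = n ! := by
  simpa [Real.rpow_natCast, Real.Gamma_nat_eq_factorial] using
    (Real.Gamma_eq_integral (s := (n : ℝ) + 1) (by positivity)).symm

theorem integral_exp_neg_mul_psum {d : ℕ → ℝ} (hd : EntireCoeffs fun n => d n * n !) (x : ℝ) :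
    ∫ t in Set.Ioi (0 : ℝ), exp (-t) * psum d (x * t) = psum (fun n => d n * n !) x := by
  set f : ℕ → ℝ → ℝ := fun n t => d n * x ^ n * (exp (-t) * t ^ n)
  have hint : ∀ n, IntegrableOn (f n) (Set.Ioi 0) := fun n =>
    (integrableOn_exp_neg_mul_pow n).const_mul _
  have hint_norm : ∀ n, ∫ t in Set.Ioi (0 : ℝ), ‖f n t‖ = |d n * n !| * |x| ^ n := by
    intro n
    rw [abs_mul, Nat.abs_cast, mul_right_comm, ← integral_exp_neg_mul_pow n, ← integral_const_mul]
    refine setIntegral_congr_fun measurableSet_Ioi fun t (ht : 0 < t) => ?_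
    rw [Real.norm_eq_abs, abs_mul, abs_of_pos (by positivity : 0 < exp (-t) * t ^ n), abs_mul,
      abs_pow]
  have hsum := hasSum_integral_of_summable_integral_norm hint
    ((hd |x| (abs_nonneg x)).congr fun n => (hint_norm n).symm)
  calc ∫ t in Set.Ioi (0 : ℝ), exp (-t) * psum d (x * t)
      = ∫ t in Set.Ioi (0 : ℝ), ∑' n, f n t := integral_congr_ae <| ae_of_all _ fun t => by
        show exp (-t) * psum d (x * t) = ∑' n, f n t
        rw [psum, ← tsum_mul_left]
        exact tsum_congr fun n => by simp only [f, mul_pow]; ring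
    _ = ∑' n, ∫ t in Set.Ioi (0 : ℝ), f n t := hsum.tsum_eq.symm
    _ = psum (fun n => d n * n !) x := tsum_congr fun n => by
        rw [integral_const_mul, integral_exp_neg_mul_pow]
        ring

theorem F_eq_exp_mul_psum : F = fun x => exp (-3 * x) * psum egfCoeff x := by
  have hcoeff : (fun n => cauchyCoeff (cauchyCoeff gCoeff gCoeff) gCoeff n * n !) = egfCoeff := by
    funext n
    rw [cauchyCoeff_cauchyCoeff_gCoeff, egfCoeff]
    field_simp
  have hd : EntireCoeffs fun n => cauchyCoeff (cauchyCoeff gCoeff gCoeff) gCoeff n * n ! :=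
    hcoeff ▸ entireCoeffs_egfCoeff
  funext x
  rw [F, ← hcoeff, ← integral_exp_neg_mul_psum hd, ← integral_const_mul]
  refine integral_congr_ae (ae_of_all _ fun t => ?_)
  dsimp only
  rw [g_pow_three, sub_eq_add_neg, exp_add, neg_mul]
  ring

namespace EntireCoeffs

variable {d : ℕ → ℝ}

theorem psum_expDerivCoeff (hd : EntireCoeffs d) (a x : ℝ) :
    psum (_root_.expDerivCoeff a d) x = psum (_root_.derivCoeff d) x + a * psum d x := by
  have hterm : (fun n => _root_.expDerivCoeff a d n * x ^ n)
      = fun n => _root_.derivCoeff d n * x ^ n + a * (d n * x ^ n) := by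
    funext n
    rw [_root_.expDerivCoeff]
    ring
  have h := (hd.derivCoeff.hasSum x).add ((hd.hasSum x).mul_left a)
  rw [← hterm] at h
  exact h.tsum_eq

theorem hasDerivAt_exp_mul_psum (hd : EntireCoeffs d) (a x : ℝ) :
    HasDerivAt (fun y => exp (a * y) * psum d y)
      (exp (a * x) * psum (_root_.expDerivCoeff a d) x) x := by
  have hexp : HasDerivAt (fun y => exp (a * y)) (exp (a * x) * a) x := by
    simpa using ((hasDerivAt_id x).const_mul a).exp
  refine (hexp.mul (hd.hasDerivAt_psum x)).congr_deriv ?_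
  rw [hd.psum_expDerivCoeff]
  ring

theorem deriv_exp_mul_psum (hd : EntireCoeffs d) (a : ℝ) :
    deriv (fun y => exp (a * y) * psum d y)
      = fun x => exp (a * x) * psum (_root_.expDerivCoeff a d) x :=
  funext fun x => (hd.hasDerivAt_exp_mul_psum a x).deriv

end EntireCoeffs

local notation "D" => expDerivCoeff (-3)

/-- The `n`-th Taylor coefficient of `e^{3x} A_x (e^{-3x} ∑ cₖ xᵏ)`. Conjugation by `e^{-3x}` turns
`A_x` into `x²D³ + (3x−10x²)D² + (9x²−20x+1)D + (9x−3)`, so this coefficient equals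
`(n+1)³ cₙ₊₁ − (10n²+10n+3) cₙ + 9n cₙ₋₁`. -/
theorem annihilator_coeff_egfCoeff (n : ℕ) :
    shiftCoeff 2 (D (D (D egfCoeff))) n - shiftCoeff 2 (D (D egfCoeff)) n
      + 3 * shiftCoeff 1 (D (D egfCoeff)) n - 24 * shiftCoeff 2 (D egfCoeff) n
      - 2 * shiftCoeff 1 (D egfCoeff) n + D egfCoeff n - 36 * shiftCoeff 2 egfCoeff n
      - 24 * shiftCoeff 1 egfCoeff n = 0 := by
  rcases n with _ | _ | m
  · simp only [shiftCoeff, nonpos_iff_eq_zero, OfNat.ofNat_ne_zero, one_ne_zero, ↓reduceIte,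
      expDerivCoeff, derivCoeff, CharP.cast_eq_zero]
    linear_combination egfCoeff_one
  · simp only [shiftCoeff, Nat.not_ofNat_le_one, le_refl, ↓reduceIte, expDerivCoeff, derivCoeff,
      tsub_self, CharP.cast_eq_zero, Nat.cast_one, Nat.reduceAdd]
    linear_combination egfCoeff_recurrence 0
  · simp only [shiftCoeff, le_add_iff_nonneg_left, zero_le, ↓reduceIte, expDerivCoeff, derivCoeff,
      Nat.reduceSubDiff, add_tsub_cancel_right]
    have h := egfCoeff_recurrence (m + 1)
    push_cast at h ⊢
    linear_combination h

theorem psum_egfCoeff_annihilated (x : ℝ) :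
    x ^ 2 * psum (D (D (D egfCoeff))) x - (x ^ 2 - 3 * x) * psum (D (D egfCoeff)) x
      - (24 * x ^ 2 + 2 * x - 1) * psum (D egfCoeff) x - (36 * x ^ 2 + 24 * x) * psum egfCoeff x
      = 0 := by
  have h0 := entireCoeffs_egfCoeff
  have h1 := h0.expDerivCoeff (-3)
  have h2 := h1.expDerivCoeff (-3)
  have h3 := h2.expDerivCoeff (-3)
  have h := (((((((h3.hasSum_shiftCoeff 2 x).sub (h2.hasSum_shiftCoeff 2 x)).add
    ((h2.hasSum_shiftCoeff 1 x).mul_left 3)).sub ((h1.hasSum_shiftCoeff 2 x).mul_left 24)).sub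
    ((h1.hasSum_shiftCoeff 1 x).mul_left 2)).add (h1.hasSum x)).sub
    ((h0.hasSum_shiftCoeff 2 x).mul_left 36)).sub ((h0.hasSum_shiftCoeff 1 x).mul_left 24)
  have hval := h.unique (hasSum_zero.congr_fun fun n => by
    linear_combination x ^ n * annihilator_coeff_egfCoeff n)
  linear_combination hval

/-- `F` is three times differentiable on `(0,∞)` and is annihilated there by the operator
`x²D³ − (x²−3x)D² − (24x²+2x−1)D − (36x²+24x)`. -/
theorem integral_annihilated :
    ∀ x ∈ Set.Ioi (0:ℝ),
      DifferentiableAt ℝ F x ∧ DifferentiableAt ℝ (deriv F) x ∧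
      DifferentiableAt ℝ (deriv (deriv F)) x ∧
      x ^ 2 * deriv (deriv (deriv F)) x - (x ^ 2 - 3 * x) * deriv (deriv F) x -
        (24 * x ^ 2 + 2 * x - 1) * deriv F x - (36 * x ^ 2 + 24 * x) * F x = 0 := by
  intro x _
  have h0 := entireCoeffs_egfCoeff
  have h1 := h0.expDerivCoeff (-3)
  have h2 := h1.expDerivCoeff (-3)
  rw [F_eq_exp_mul_psum, h0.deriv_exp_mul_psum, h1.deriv_exp_mul_psum, h2.deriv_exp_mul_psum]
  exact ⟨(h0.hasDerivAt_exp_mul_psum _ x).differentiableAt,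
    (h1.hasDerivAt_exp_mul_psum _ x).differentiableAt,
    (h2.hasDerivAt_exp_mul_psum _ x).differentiableAt,
    by linear_combination exp (-3 * x) * psum_egfCoeff_annihilated x⟩
end

section
/- Let β > 0 be irrational. For b > 0 let μ_b denote the pushforward of the uniform probability distribution on [0,b] under the map x ↦ 3 + 2(cos x + cos(βx) + cos((1+β)x)), and let ν denote the pushforward of the uniform probability distribution on [0,2π]³ under the map (φ₁,φ₂,φ₃) ↦ |e^{iφ₁} + e^{iφ₂} + e^{iφ₃}|². Then μ_b converges weakly to ν as b → ∞; i.e., for every bounded continuous function f : ℝ → ℝ, (1/b)∫₀^b f(3 + 2(cos x + cos(βx) + cos((1+β)x))) dx → (1/(2π)³)∫_{[0,2π]³} f(|e^{iφ₁}+e^{iφ₂}+e^{iφ₃}|²) dφ as b → ∞. -/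
open Real Filter

/-!
`T = |e^{iφ₁} + e^{iφ₂} + e^{iφ₃}|²` depends only on the relative phases `φ₂ - φ₁` and `φ₃ - φ₁`,
so by periodicity the triple integral is the Haar integral of `f ∘ T` over the 2-torus, and along
the line `x ↦ (x, (1 + β) x)` the function `T` equals `3 + 2(cos x + cos βx + cos (1 + β)x)`.
Since `1` and `1 + β` are rationally independent, the linear flow in this direction equidistributes
(Kronecker–Weyl): its time averages converge to the Haar average for characters by a direct
computation, hence for all continuous functions because the time averages are linear maps of norm
at most one and trigonometric polynomials are dense.
-/

open MeasureTheory Topology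

theorem ContinuousLinearMap.tendsto_apply_of_tendsto_on_dense_span {ι 𝕜 E F : Type*}
    [NontriviallyNormedField 𝕜] [NormedAddCommGroup E] [NormedSpace 𝕜 E]
    [NormedAddCommGroup F] [NormedSpace 𝕜 F] {l : Filter ι} {L : ι → E →L[𝕜] F}
    {L₀ : E →L[𝕜] F} {C : ℝ} (hL : ∀ i, ‖L i‖ ≤ C) {s : Set E}
    (hs : (Submodule.span 𝕜 s).topologicalClosure = ⊤)
    (h : ∀ x ∈ s, Tendsto (L · x) l (𝓝 (L₀ x))) (x : E) :
    Tendsto (L · x) l (𝓝 (L₀ x)) := by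
  let S : Submodule 𝕜 E :=
    { carrier := {x | Tendsto (L · x) l (𝓝 (L₀ x))}
      add_mem' := fun hx hy => by simpa using hx.add hy
      zero_mem' := by simpa using tendsto_const_nhds
      smul_mem' := fun c x hx => by simpa using hx.const_smul c }
  have hLip (i : ι) : LipschitzWith C.toNNReal (L i) := (L i).lipschitz.weaken <| by
    rw [← NNReal.coe_le_coe, coe_nnnorm]
    exact (hL i).trans C.le_coe_toNNReal
  have hS : IsClosed (S : Set E) :=
    (LipschitzWith.uniformEquicontinuous _ _ hLip).equicontinuous.isClosed_setOfPred_tendsto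
      L₀.continuous
  have hsS : Submodule.span 𝕜 s ≤ S := Submodule.span_le.2 h
  exact (hs ▸ Submodule.topologicalClosure_minimal _ hsS hS : ⊤ ≤ S) Submodule.mem_top

theorem integral_fourier_haarAddCircle {T : ℝ} [hT : Fact (0 < T)] (n : ℤ) :
    ∫ t : AddCircle T, fourier n t ∂AddCircle.haarAddCircle = if n = 0 then 1 else 0 := by
  split_ifs with hn
  · simp [hn]
  · exact integral_eq_zero_of_add_right_eq_neg (fourier_add_half_inv_index hn hT.out)

open Complex in
theorem tendsto_average_exp_mul_I {c : ℝ} (hc : c ≠ 0) :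
    Tendsto (fun b : ℝ => (b : ℂ)⁻¹ * ∫ t in 0..b, exp (↑(c * t) * I)) atTop (𝓝 0) := by
  have hcI : (c : ℂ) * I ≠ 0 := mul_ne_zero (ofReal_ne_zero.2 hc) I_ne_zero
  have hint (b : ℝ) : ∫ t in 0..b, exp (↑(c * t) * I) = (exp (↑(c * b) * I) - 1) / (c * I) := by
    have := integral_exp_mul_complex (a := 0) (b := b) hcI
    simp only [ofReal_zero, mul_zero, Complex.exp_zero] at this
    convert this using 3 <;> push_cast <;> ring_nf
  have hbound (b : ℝ) : ‖(b : ℂ)⁻¹ * ∫ t in 0..b, exp (↑(c * t) * I)‖ ≤ 2 / |c| * |b|⁻¹ := by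
    have hnum : ‖exp (↑(c * b) * I) - 1‖ ≤ 2 :=
      calc _ ≤ ‖exp (↑(c * b) * I)‖ + ‖(1 : ℂ)‖ := norm_sub_le _ _
        _ = 2 := by rw [norm_exp_ofReal_mul_I, norm_one]; norm_num
    rw [hint, norm_mul, norm_div, norm_mul, norm_I, mul_one, norm_inv, norm_real, norm_real,
      Real.norm_eq_abs, Real.norm_eq_abs, mul_comm]
    gcongr
  refine squeeze_zero_norm hbound ?_
  simpa using (tendsto_inv_atTop_zero.comp tendsto_abs_atTop_atTop).const_mul (2 / |c|)

noncomputable section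

namespace UnitAddTorus

open Complex

variable {d : Type*}

abbrev haarUnitAddTorus [Fintype d] : Measure (UnitAddTorus d) :=
  Measure.pi fun _ => AddCircle.haarAddCircle

def linearFlow (α : d → ℝ) (t : ℝ) : UnitAddTorus d := fun i => ((t * α i : ℝ) : UnitAddCircle)

@[fun_prop]
theorem continuous_linearFlow (α : d → ℝ) : Continuous (linearFlow α) := by
  unfold linearFlow
  fun_prop

def flowAverage (α : d → ℝ) (b : ℝ) : C(UnitAddTorus d, ℂ) →L[ℂ] ℂ :=
  LinearMap.mkContinuous
    { toFun := fun P => (b : ℂ)⁻¹ * ∫ t in 0..b, P (linearFlow α t)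
      map_add' := fun P Q => by
        rw [← mul_add, ← intervalIntegral.integral_add
          ((by fun_prop : Continuous fun t => P (linearFlow α t)).intervalIntegrable _ _)
          ((by fun_prop : Continuous fun t => Q (linearFlow α t)).intervalIntegrable _ _)]
        rfl
      map_smul' := fun c P => by
        simp only [ContinuousMap.smul_apply, smul_eq_mul, intervalIntegral.integral_const_mul,
          RingHom.id_apply]
        ring }
    1 fun P => by
      have hint : ‖∫ t in 0..b, P (linearFlow α t)‖ ≤ ‖P‖ * |b - 0| :=
        intervalIntegral.norm_integral_le_of_norm_le_const fun t _ => P.norm_coe_le_norm _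
      simp only [LinearMap.coe_mk, AddHom.coe_mk, norm_mul, norm_inv, norm_real, one_mul,
        sub_zero, Real.norm_eq_abs] at hint ⊢
      rcases eq_or_ne b 0 with rfl | hb
      · simp
      · calc |b|⁻¹ * ‖∫ t in 0..b, P (linearFlow α t)‖ ≤ |b|⁻¹ * (‖P‖ * |b|) := by gcongr
          _ = ‖P‖ := by field_simp

theorem flowAverage_apply (α : d → ℝ) (b : ℝ) (P : C(UnitAddTorus d, ℂ)) :
    flowAverage α b P = (b : ℂ)⁻¹ * ∫ t in 0..b, P (linearFlow α t) := rfl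

theorem norm_flowAverage_le (α : d → ℝ) (b : ℝ) : ‖flowAverage α b‖ ≤ 1 :=
  LinearMap.mkContinuous_norm_le _ zero_le_one _

variable [Fintype d]

def haarAverage : C(UnitAddTorus d, ℂ) →L[ℂ] ℂ :=
  LinearMap.mkContinuous
    { toFun := fun P => ∫ x, P x ∂haarUnitAddTorus
      map_add' := fun P Q => integral_add
        (P.continuous.integrable_of_hasCompactSupport (HasCompactSupport.of_compactSpace _))
        (Q.continuous.integrable_of_hasCompactSupport (HasCompactSupport.of_compactSpace _))
      map_smul' := fun c P => integral_smul c _ }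
    1 fun P => by
      simpa using norm_integral_le_of_norm_le_const (μ := haarUnitAddTorus)
        (Eventually.of_forall fun x => P.norm_coe_le_norm x)

theorem haarAverage_apply (P : C(UnitAddTorus d, ℂ)) :
    haarAverage P = ∫ x, P x ∂haarUnitAddTorus := rfl

theorem integral_mFourier (n : d → ℤ) :
    ∫ x, mFourier n x ∂haarUnitAddTorus = if n = 0 then 1 else 0 := by
  classical
  simp only [mFourier, ContinuousMap.coe_mk]
  rw [integral_fintype_prod_eq_prod (fun i x => fourier (n i) x)]
  simp only [integral_fourier_haarAddCircle, Finset.prod_boole, Finset.mem_univ, true_implies,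
    funext_iff, Pi.zero_apply]

theorem mFourier_linearFlow (n : d → ℤ) (α : d → ℝ) (t : ℝ) :
    mFourier n (linearFlow α t) = exp (↑(2 * π * (∑ i, n i * α i) * t) * I) := by
  simp only [mFourier, linearFlow, ContinuousMap.coe_mk, fourier_coe_apply, ← Complex.exp_sum]
  congr 1
  push_cast
  simp only [Finset.mul_sum, Finset.sum_mul]
  exact Finset.sum_congr rfl fun i _ => by ring

theorem tendsto_flowAverage_mFourier {α : d → ℝ} (hα : LinearIndependent ℤ α) (n : d → ℤ) :
    Tendsto (fun b => flowAverage α b (mFourier n)) atTop (𝓝 (haarAverage (mFourier n))) := by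
  rw [haarAverage_apply, integral_mFourier]
  split_ifs with hn
  · subst hn
    refine tendsto_const_nhds.congr' ?_
    filter_upwards [eventually_ne_atTop 0] with b hb
    simp [flowAverage_apply, mFourier_zero, hb]
  · have hc : 2 * π * ∑ i, n i * α i ≠ 0 := by
      refine mul_ne_zero (by positivity) fun hsum => hn (funext ?_)
      refine Fintype.linearIndependent_iff.1 hα n ?_
      simpa only [zsmul_eq_mul] using hsum
    simpa only [flowAverage_apply, mFourier_linearFlow, mul_assoc]
      using tendsto_average_exp_mul_I hc

theorem tendsto_flowAverage {α : d → ℝ} (hα : LinearIndependent ℤ α)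
    (P : C(UnitAddTorus d, ℂ)) :
    Tendsto (fun b => flowAverage α b P) atTop (𝓝 (haarAverage P)) :=
  ContinuousLinearMap.tendsto_apply_of_tendsto_on_dense_span
    (norm_flowAverage_le α) span_mFourier_closure_eq_top
    (by rintro _ ⟨n, rfl⟩; exact tendsto_flowAverage_mFourier hα n) P

theorem tendsto_average_comp_linearFlow {α : d → ℝ} (hα : LinearIndependent ℤ α)
    (g : C(UnitAddTorus d, ℝ)) :
    Tendsto (fun b => b⁻¹ * ∫ t in 0..b, g (linearFlow α t)) atTop
      (𝓝 (∫ x, g x ∂haarUnitAddTorus)) := by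
  have := (continuous_re.tendsto _).comp (tendsto_flowAverage hα ((ofRealCLM : C(ℝ, ℂ)).comp g))
  simpa [Function.comp_def, flowAverage_apply, haarAverage_apply,
    intervalIntegral.integral_ofReal, integral_complex_ofReal] using this

theorem integral_fin_two {E : Type*} [NormedAddCommGroup E] [NormedSpace ℝ E] [CompleteSpace E]
    (g : C(UnitAddTorus (Fin 2), E)) :
    ∫ x, g x ∂haarUnitAddTorus
      = ∫ s in 0..1, ∫ t in 0..1, g ![(s : UnitAddCircle), (t : UnitAddCircle)] := by
  rw [← (measurePreserving_finTwoArrow _).symm.integral_comp', integral_prod]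
  · simp [← UnitAddCircle.intervalIntegral_preimage 0, AddCircle.integral_haarAddCircle]
  · refine Continuous.integrable_of_hasCompactSupport ?_ (HasCompactSupport.of_compactSpace _)
    exact g.continuous.comp (continuous_pi (Fin.forall_fin_two.2 ⟨continuous_fst, continuous_snd⟩))

end UnitAddTorus

theorem UnitAddCircle.fourier_one_coe (s : ℝ) :
    fourier 1 (s : UnitAddCircle) = Complex.exp (↑(2 * π * s) * Complex.I) := by
  rw [fourier_coe_apply]
  push_cast
  ring_nf

theorem linearIndependent_pair_mul_of_irrational {c γ : ℝ} (hc : c ≠ 0) (hγ : Irrational γ) :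
    LinearIndependent ℤ ![c, c * γ] := by
  refine LinearIndependent.pair_iff.2 fun s t hst => ?_
  have hsum : (s : ℝ) + t * γ = 0 := by
    simp only [zsmul_eq_mul] at hst
    exact (mul_eq_zero.1 (by linear_combination hst : c * (s + t * γ) = 0)).resolve_left hc
  have ht : t = 0 := by
    by_contra ht
    exact ((hγ.intCast_mul ht).intCast_add s).ne_zero hsum
  subst ht
  simpa using hsum

theorem Function.Periodic.intervalIntegral_comp_sub {E : Type*} [NormedAddCommGroup E]
    [NormedSpace ℝ E] {f : ℝ → E} {T : ℝ} (hf : f.Periodic T) (c : ℝ) :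
    ∫ x in 0..T, f (x - c) = ∫ x in 0..T, f x := by
  simpa [intervalIntegral.integral_comp_sub_right, sub_eq_neg_add] using
    hf.intervalIntegral_add_eq (-c) 0

theorem intervalIntegral_integral_integral_comp_sub_sub {H : ℝ → ℝ → ℝ} {T : ℝ}
    (hH₁ : ∀ v, (H · v).Periodic T) (hH₂ : ∀ u, (H u).Periodic T) :
    ∫ φ₁ in 0..T, ∫ φ₂ in 0..T, ∫ φ₃ in 0..T, H (φ₂ - φ₁) (φ₃ - φ₁)
      = T * ∫ u in 0..T, ∫ v in 0..T, H u v := by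
  have hper : (fun u => ∫ v in 0..T, H u v).Periodic T := fun u => by simp only [hH₁ _ u]
  simp only [(hH₂ _).intervalIntegral_comp_sub, hper.intervalIntegral_comp_sub,
    intervalIntegral.integral_const, sub_zero, smul_eq_mul]

section RandomEigenvalue

open Complex

/-- The random eigenvalue `T` in terms of the relative phases `u = φ₂ - φ₁`, `v = φ₃ - φ₁`. -/
def eigenvalueT (u v : ℝ) : ℝ := ‖1 + exp (u * I) + exp (v * I)‖ ^ 2

theorem norm_exp_add_exp_add_exp_sq (a b c : ℝ) :
    ‖exp (a * I) + exp (b * I) + exp (c * I)‖ ^ 2 = eigenvalueT (b - a) (c - a) := by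
  rw [eigenvalueT, ← one_mul ‖1 + _ + _‖, ← norm_exp_ofReal_mul_I a, ← norm_mul]
  congr 2
  simp only [mul_add, mul_one, ← Complex.exp_add]
  push_cast
  ring_nf

theorem eigenvalueT_eq (u v : ℝ) :
    eigenvalueT u v = 3 + 2 * (Real.cos u + Real.cos (v - u) + Real.cos v) := by
  rw [eigenvalueT, Complex.sq_norm, Complex.normSq_apply]
  simp only [add_re, add_im, one_re, one_im, exp_ofReal_mul_I_re, exp_ofReal_mul_I_im,
    Real.cos_sub]
  linear_combination Real.sin_sq_add_cos_sq u + Real.sin_sq_add_cos_sq v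

theorem periodic_eigenvalueT_left (v : ℝ) : (eigenvalueT · v).Periodic (2 * π) := fun u => by
  simpa [eigenvalueT] using congrArg (‖1 + · + exp (v * I)‖) (exp_mul_I_periodic u)

theorem periodic_eigenvalueT_right (u : ℝ) : (eigenvalueT u).Periodic (2 * π) := fun v => by
  simpa [eigenvalueT] using congrArg (‖1 + exp (u * I) + ·‖) (exp_mul_I_periodic v)

theorem integral_integral_integral_comp_norm_exp_sq (f : ℝ → ℝ) :
    ∫ φ₁ in 0..2 * π, ∫ φ₂ in 0..2 * π, ∫ φ₃ in 0..2 * π,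
        f (‖exp (φ₁ * I) + exp (φ₂ * I) + exp (φ₃ * I)‖ ^ 2)
      = 2 * π * ∫ u in 0..2 * π, ∫ v in 0..2 * π, f (eigenvalueT u v) := by
  simp only [norm_exp_add_exp_add_exp_sq]
  exact intervalIntegral_integral_integral_comp_sub_sub
    (fun v => (periodic_eigenvalueT_left v).comp f) (fun u => (periodic_eigenvalueT_right u).comp f)

def eigenvalueTorus : C(UnitAddTorus (Fin 2), ℝ) :=
  ⟨fun p => ‖1 + fourier 1 (p 0) + fourier 1 (p 1)‖ ^ 2, by fun_prop⟩

theorem eigenvalueTorus_coe (s t : ℝ) :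
    eigenvalueTorus ![(s : UnitAddCircle), (t : UnitAddCircle)]
      = eigenvalueT (2 * π * s) (2 * π * t) := by
  simp only [eigenvalueTorus, eigenvalueT, ContinuousMap.coe_mk, Matrix.cons_val_zero,
    Matrix.cons_val_one, UnitAddCircle.fourier_one_coe]

theorem eigenvalueTorus_linearFlow (β x : ℝ) :
    eigenvalueTorus (UnitAddTorus.linearFlow ![(2 * π)⁻¹, (2 * π)⁻¹ * (1 + β)] x)
      = 3 + 2 * (Real.cos x + Real.cos (β * x) + Real.cos ((1 + β) * x)) := by
  simp only [eigenvalueTorus, UnitAddTorus.linearFlow, ContinuousMap.coe_mk,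
    Matrix.cons_val_zero, Matrix.cons_val_one, UnitAddCircle.fourier_one_coe]
  rw [show 2 * π * (x * (2 * π)⁻¹) = x by field_simp,
    show 2 * π * (x * ((2 * π)⁻¹ * (1 + β))) = (1 + β) * x by field_simp,
    ← eigenvalueT, eigenvalueT_eq, show (1 + β) * x - x = β * x by ring]

theorem integral_comp_eigenvalueTorus {f : ℝ → ℝ} (hf : Continuous f) :
    ∫ p, f (eigenvalueTorus p) ∂UnitAddTorus.haarUnitAddTorus
      = (2 * π)⁻¹ * ((2 * π)⁻¹ * ∫ u in 0..2 * π, ∫ v in 0..2 * π, f (eigenvalueT u v)) := by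
  have h2π : 2 * π ≠ 0 := by positivity
  calc ∫ p, f (eigenvalueTorus p) ∂UnitAddTorus.haarUnitAddTorus
      = ∫ s in 0..1, ∫ t in 0..1, f (eigenvalueT (2 * π * s) (2 * π * t)) := by
        simpa only [ContinuousMap.comp_apply, ContinuousMap.coe_mk, eigenvalueTorus_coe]
          using UnitAddTorus.integral_fin_two ((⟨f, hf⟩ : C(ℝ, ℝ)).comp eigenvalueTorus)
    _ = _ := by
        have hin (s : ℝ) := intervalIntegral.integral_comp_mul_left (a := 0) (b := 1)
          (fun v => f (eigenvalueT (2 * π * s) v)) h2π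
        simp only [hin, intervalIntegral.integral_const_mul, mul_zero, mul_one, smul_eq_mul]
        rw [intervalIntegral.integral_comp_mul_left
          (fun u => ∫ v in 0..2 * π, f (eigenvalueT u v)) h2π, mul_zero, mul_one, smul_eq_mul]

end RandomEigenvalue

end

theorem weak_convergence_to_random_eigenvalue_T_general
    (β : ℝ) (hβirr : Irrational β)
    (f : ℝ → ℝ) (hf : Continuous f) :
    Tendsto (fun b : ℝ =>
        (1 / b) * ∫ x in (0:ℝ)..b,
          f (3 + 2 * (Real.cos x + Real.cos (β * x) + Real.cos ((1 + β) * x))))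
      atTop
      (nhds ((1 / (2 * π) ^ 3) *
        ∫ φ₁ in (0:ℝ)..(2 * π), ∫ φ₂ in (0:ℝ)..(2 * π), ∫ φ₃ in (0:ℝ)..(2 * π),
          f (‖Complex.exp (φ₁ * Complex.I) + Complex.exp (φ₂ * Complex.I) +
            Complex.exp (φ₃ * Complex.I)‖ ^ 2))) := by
  have hα : LinearIndependent ℤ ![(2 * π)⁻¹, (2 * π)⁻¹ * (1 + β)] :=
    linearIndependent_pair_mul_of_irrational (by positivity) (by simpa using hβirr.intCast_add 1)
  have key := UnitAddTorus.tendsto_average_comp_linearFlow (d := Fin 2) hα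
    ((⟨f, hf⟩ : C(ℝ, ℝ)).comp eigenvalueTorus)
  simp only [ContinuousMap.comp_apply, ContinuousMap.coe_mk, eigenvalueTorus_linearFlow,
    integral_comp_eigenvalueTorus hf] at key
  rw [integral_integral_integral_comp_norm_exp_sq]
  simp only [one_div]
  convert key using 2
  field_simp

/-- The law of `3 + 2Y_b` converges weakly, as `b → ∞`, to the law of the random
eigenvalue `T` of the triangular lattice with loops, namely the law of
`|e^{iφ₁}+e^{iφ₂}+e^{iφ₃}|²` for independent uniform angles `φ₁,φ₂,φ₃` on `[0,2π]`. -/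
theorem weak_convergence_to_random_eigenvalue_T
    (β : ℝ) (hβpos : 0 < β) (hβirr : Irrational β)
    (f : ℝ → ℝ) (hf : Continuous f) (hbdd : ∃ C : ℝ, ∀ y : ℝ, |f y| ≤ C) :
    Tendsto (fun b : ℝ =>
        (1 / b) * ∫ x in (0:ℝ)..b,
          f (3 + 2 * (Real.cos x + Real.cos (β * x) + Real.cos ((1 + β) * x))))
      atTop
      (nhds ((1 / (2 * π) ^ 3) *
        ∫ φ₁ in (0:ℝ)..(2 * π), ∫ φ₂ in (0:ℝ)..(2 * π), ∫ φ₃ in (0:ℝ)..(2 * π),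
          f (‖Complex.exp (φ₁ * Complex.I) + Complex.exp (φ₂ * Complex.I) +
            Complex.exp (φ₃ * Complex.I)‖ ^ 2))) :=
  weak_convergence_to_random_eigenvalue_T_general β hβirr f hf
end

section
/- Let β > 0 be irrational. For every natural number k, lim_{b→∞} (1/b) ∫₀^b (3 + 2(cos x + cos(βx) + cos((1+β)x)))^k dx = a_k; i.e., every moment of the random variable 3 + 2Y_b, with Y_b = cos(X_b) + cos(βX_b) + cos((1+β)X_b) and X_b uniform on [0,b], converges to the corresponding moment a_k of the random eigenvalue T of the triangular lattice. -/
open Real Filter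

section aux

open Finset Complex

private lemma key_exp (β x : ℝ) :
    ((3 + 2 * (Real.cos x + Real.cos (β * x) + Real.cos ((1 + β) * x)) : ℝ) : ℂ)
      = (1 + Complex.exp (x * Complex.I) + Complex.exp (-(β * x) * Complex.I)) *
        (1 + Complex.exp (-x * Complex.I) + Complex.exp ((β * x) * Complex.I)) := by
  have h2 : ∀ t : ℝ, ((Real.cos t : ℝ) : ℂ) * 2
      = Complex.exp (t * Complex.I) + Complex.exp (-t * Complex.I) := by
    intro t
    rw [Complex.ofReal_cos, mul_comm, Complex.two_cos]
  have e1 := h2 x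
  have e2 := h2 (β * x)
  have e3 := h2 ((1 + β) * x)
  have hx : Complex.exp (((1+β)*x : ℝ) * Complex.I)
      = Complex.exp ((x:ℝ) * Complex.I) * Complex.exp ((β*x : ℝ) * Complex.I) := by
    rw [← Complex.exp_add]; push_cast; ring_nf
  have hx' : Complex.exp (-(((1+β)*x : ℝ)) * Complex.I)
      = Complex.exp (-(x:ℝ) * Complex.I) * Complex.exp (-(β*x : ℝ) * Complex.I) := by
    rw [← Complex.exp_add]; push_cast; ring_nf
  have hu : Complex.exp ((x:ℝ) * Complex.I) * Complex.exp (-(x:ℝ) * Complex.I) = 1 := by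
    rw [← Complex.exp_add]; ring_nf; exact Complex.exp_zero
  have hv : Complex.exp ((β*x:ℝ) * Complex.I) * Complex.exp (-(β*x:ℝ) * Complex.I) = 1 := by
    rw [← Complex.exp_add]; ring_nf; exact Complex.exp_zero
  push_cast at e1 e2 e3 hx hx' hu hv ⊢
  linear_combination e1 + e2 + e3 + hx + hx' - hu - hv

private lemma term_eq (β x : ℝ) (p q : Fin 3 → ℕ) :
    (1:ℂ)^(p 0) * Complex.exp ((x:ℂ) * Complex.I) ^ (p 1) *
        Complex.exp (-((β:ℂ)*(x:ℂ)) * Complex.I) ^ (p 2) *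
      ((1:ℂ)^(q 0) * Complex.exp (-(x:ℂ) * Complex.I) ^ (q 1) *
        Complex.exp (((β:ℂ)*(x:ℂ)) * Complex.I) ^ (q 2))
    = Complex.exp (((((p 1:ℝ) - β * p 2) - ((q 1:ℝ) - β * q 2)) * x : ℝ) * Complex.I) := by
  simp only [one_pow, one_mul, ← Complex.exp_nat_mul, ← Complex.exp_add]
  congr 1
  push_cast
  ring

private lemma expand_pow (β : ℝ) (k : ℕ) (x : ℝ) :
    (3 + 2 * (Real.cos x + Real.cos (β * x) + Real.cos ((1 + β) * x))) ^ k
      = ∑ p ∈ Finset.piAntidiag (Finset.univ : Finset (Fin 3)) k,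
          ∑ q ∈ Finset.piAntidiag (Finset.univ : Finset (Fin 3)) k,
            ((Nat.multinomial Finset.univ p * Nat.multinomial Finset.univ q : ℕ) : ℝ) *
              Real.cos ((((p 1 : ℝ) - β * p 2) - ((q 1 : ℝ) - β * q 2)) * x) := by
  set w : Fin 3 → ℂ :=
    ![1, Complex.exp ((x:ℂ) * Complex.I), Complex.exp (-((β:ℂ)*(x:ℂ)) * Complex.I)] with hw
  set w' : Fin 3 → ℂ :=
    ![1, Complex.exp (-(x:ℂ) * Complex.I), Complex.exp (((β:ℂ)*(x:ℂ)) * Complex.I)] with hw'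
  have h1 : ((3 + 2 * (Real.cos x + Real.cos (β * x) + Real.cos ((1 + β) * x)) : ℝ) : ℂ)
      = (∑ i, w i) * (∑ i, w' i) := by
    rw [key_exp β x, Fin.sum_univ_three, Fin.sum_univ_three]
    simp [hw, hw']
  have h2 : (((3 + 2 * (Real.cos x + Real.cos (β * x) + Real.cos ((1 + β) * x))) ^ k : ℝ) : ℂ)
      = ∑ p ∈ Finset.piAntidiag (Finset.univ : Finset (Fin 3)) k,
          ∑ q ∈ Finset.piAntidiag (Finset.univ : Finset (Fin 3)) k,
            ((Nat.multinomial Finset.univ p * Nat.multinomial Finset.univ q : ℕ) : ℂ) *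
              Complex.exp (((((p 1 : ℝ) - β * p 2) - ((q 1 : ℝ) - β * q 2)) * x : ℝ)
                * Complex.I) := by
    rw [Complex.ofReal_pow, h1, mul_pow,
      Finset.sum_pow_eq_sum_piAntidiag Finset.univ w k,
      Finset.sum_pow_eq_sum_piAntidiag Finset.univ w' k,
      Finset.sum_mul_sum]
    refine Finset.sum_congr rfl fun p hp => Finset.sum_congr rfl fun q hq => ?_
    rw [Fin.prod_univ_three, Fin.prod_univ_three]
    simp only [hw, hw', Matrix.cons_val_zero, Matrix.cons_val_one, Matrix.head_cons,
      Matrix.cons_val_two, Matrix.tail_cons]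
    rw [mul_mul_mul_comm, term_eq β x p q]
    push_cast
    ring
  have h3 := congrArg Complex.re h2
  rw [Complex.ofReal_re] at h3
  rw [h3, Complex.re_sum]
  refine Finset.sum_congr rfl fun p hp => ?_
  rw [Complex.re_sum]
  refine Finset.sum_congr rfl fun q hq => ?_
  rw [Complex.mul_re]
  simp only [Complex.natCast_re, Complex.natCast_im, Complex.exp_ofReal_mul_I_re,
    zero_mul, sub_zero]

private lemma tendsto_avg_cos (μ : ℝ) :
    Tendsto (fun b : ℝ => (1 / b) * ∫ x in (0:ℝ)..b, Real.cos (μ * x)) atTop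
      (nhds (if μ = 0 then 1 else 0)) := by
  by_cases hμ : μ = 0
  · simp only [hμ, if_pos, zero_mul, Real.cos_zero]
    have h : ∀ᶠ b : ℝ in atTop, (1:ℝ) = (1 / b) * ∫ x in (0:ℝ)..b, (1:ℝ) := by
      filter_upwards [eventually_gt_atTop (0:ℝ)] with b hb
      simp [hb.ne']
    exact Tendsto.congr' h tendsto_const_nhds
  · rw [if_neg hμ]
    have hint : ∀ b : ℝ, ∫ x in (0:ℝ)..b, Real.cos (μ * x) = Real.sin (μ * b) / μ := by
      intro b
      rw [intervalIntegral.integral_comp_mul_left Real.cos hμ]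
      simp [integral_cos, hμ, div_eq_inv_mul]
    simp only [hint]
    apply squeeze_zero_norm (a := fun b : ℝ => |1/b| * |μ|⁻¹)
    · intro b
      rw [norm_mul, Real.norm_eq_abs, Real.norm_eq_abs]
      refine mul_le_mul_of_nonneg_left ?_ (abs_nonneg _)
      rw [abs_div, div_le_iff₀ (abs_pos.mpr hμ), inv_mul_cancel₀ (abs_ne_zero.mpr hμ)]
      exact Real.abs_sin_le_one _
    · have h2 : Tendsto (fun b : ℝ => |1/b|) atTop (nhds 0) := by
        simpa [one_div] using (tendsto_inv_atTop_zero (𝕜 := ℝ)).abs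
      simpa using h2.mul_const |μ|⁻¹

end aux

/-- Every moment of `3 + 2Y_b` converges, as `b → ∞`, to the corresponding moment
`a k` of the random eigenvalue `T` of the triangular lattice. -/
theorem moments_converge_to_a
    (β : ℝ) (hβpos : 0 < β) (hβirr : Irrational β) (k : ℕ) :
    Tendsto (fun b : ℝ =>
        (1 / b) * ∫ x in (0:ℝ)..b,
          (3 + 2 * (Real.cos x + Real.cos (β * x) + Real.cos ((1 + β) * x))) ^ k)
      atTop (nhds (a k)) := by
  classical
  set S := Finset.piAntidiag (Finset.univ : Finset (Fin 3)) k with hS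
  set c : (Fin 3 → ℕ) → ℝ := fun p => (p 1 : ℝ) - β * p 2 with hc
  set m : (Fin 3 → ℕ) → ℕ := fun p => Nat.multinomial Finset.univ p with hm
  -- rewrite the average as a finite sum of averaged cosines
  have hrw : ∀ b : ℝ,
      (1 / b) * ∫ x in (0:ℝ)..b,
          (3 + 2 * (Real.cos x + Real.cos (β * x) + Real.cos ((1 + β) * x))) ^ k
      = ∑ p ∈ S, ∑ q ∈ S, ((m p * m q : ℕ) : ℝ) *
          ((1 / b) * ∫ x in (0:ℝ)..b, Real.cos ((c p - c q) * x)) := by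
    intro b
    have hInt : ∀ (p q : Fin 3 → ℕ), IntervalIntegrable
        (fun x : ℝ => ((m p * m q : ℕ) : ℝ) * Real.cos ((c p - c q) * x))
        MeasureTheory.volume 0 b := by
      intro p q
      exact (Continuous.intervalIntegrable (by continuity) 0 b)
    have h1 : (∫ x in (0:ℝ)..b,
        (3 + 2 * (Real.cos x + Real.cos (β * x) + Real.cos ((1 + β) * x))) ^ k)
        = ∑ p ∈ S, ∑ q ∈ S, ((m p * m q : ℕ) : ℝ) *
            ∫ x in (0:ℝ)..b, Real.cos ((c p - c q) * x) := by
      rw [intervalIntegral.integral_congr (g := fun x => ∑ p ∈ S, ∑ q ∈ S,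
            ((m p * m q : ℕ) : ℝ) * Real.cos ((c p - c q) * x))
          (fun x _ => expand_pow β k x)]
      rw [intervalIntegral.integral_finset_sum (fun p _ =>
        Continuous.intervalIntegrable (continuous_finset_sum S fun q _ => by continuity) 0 b)]
      refine Finset.sum_congr rfl fun p hp => ?_
      rw [intervalIntegral.integral_finset_sum (fun q _ => hInt p q)]
      refine Finset.sum_congr rfl fun q hq => ?_
      rw [intervalIntegral.integral_const_mul]
    rw [h1, Finset.mul_sum]
    refine Finset.sum_congr rfl fun p hp => ?_
    rw [Finset.mul_sum]
    refine Finset.sum_congr rfl fun q hq => ?_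
    ring
  -- p = q iff c p = c q, on S
  have hkey : ∀ p ∈ S, ∀ q ∈ S, (c p - c q = 0) ↔ q = p := by
    intro p hp q hq
    constructor
    · intro h
      have h' : (p 1 : ℝ) - q 1 = β * ((p 2 : ℝ) - q 2) := by
        simp only [hc] at h; linarith
      have h2 : (p 2 : ℝ) = q 2 := by
        by_contra hne
        have hden : ((p 2 : ℝ) - q 2) ≠ 0 := sub_ne_zero.mpr hne
        have : β = (((p 1 : ℤ) - q 1 : ℤ) : ℝ) / (((p 2 : ℤ) - q 2 : ℤ) : ℝ) := by
          push_cast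
          field_simp at h' ⊢
          linarith
        refine hβirr ?_
        refine ⟨((p 1 : ℤ) - q 1) / ((p 2 : ℤ) - q 2), ?_⟩
        rw [this]
        push_cast
        rfl
      have hp2 : p 2 = q 2 := Nat.cast_injective h2
      have hp1 : p 1 = q 1 := by
        rw [h2, sub_self, mul_zero, sub_eq_zero] at h'
        exact_mod_cast h'
      have hps := (Finset.mem_piAntidiag.mp hp).1
      have hqs := (Finset.mem_piAntidiag.mp hq).1
      rw [Fin.sum_univ_three] at hps hqs
      have hp0 : p 0 = q 0 := by omega
      funext i
      fin_cases i <;> simp [hp0, hp1, hp2]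
    · rintro rfl; ring
  -- the limit value
  have hval : ((a k : ℕ) : ℝ)
      = ∑ p ∈ S, ∑ q ∈ S, ((m p * m q : ℕ) : ℝ) * (if c p - c q = 0 then 1 else 0) := by
    have : ∀ p ∈ S, (∑ q ∈ S, ((m p * m q : ℕ) : ℝ) * (if c p - c q = 0 then 1 else 0))
        = ((m p : ℕ) : ℝ) ^ 2 := by
      intro p hp
      have : ∀ q ∈ S, ((m p * m q : ℕ) : ℝ) * (if c p - c q = 0 then 1 else 0)
          = if q = p then ((m p : ℕ) : ℝ) ^ 2 else 0 := by
        intro q hq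
        by_cases h : q = p
        · subst h
          simp [hkey q hq q hq]
          ring
        · rw [if_neg h, if_neg (fun hcc => h ((hkey p hp q hq).mp hcc)), mul_zero]
      rw [Finset.sum_congr rfl this, Finset.sum_ite_eq' S p _, if_pos hp]
    rw [Finset.sum_congr rfl this]
    rw [a, hS, ← Finset.piAntidiag_univ_fin_eq_antidiagonalTuple k 3]
    push_cast
    rfl
  rw [show nhds ((a k : ℝ)) = nhds (∑ p ∈ S, ∑ q ∈ S, ((m p * m q : ℕ) : ℝ) *
      (if c p - c q = 0 then 1 else 0)) from by rw [← hval]]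
  refine Tendsto.congr (fun b => (hrw b).symm) ?_
  refine tendsto_finset_sum _ fun p hp => ?_
  refine tendsto_finset_sum _ fun q hq => ?_
  exact (tendsto_avg_cos (c p - c q)).const_mul _
end

section
/- Let β > 0 be irrational and let m₁, m₂, m₃ be natural numbers that are not all equal. Then lim_{b→∞} (1/b) ∫₀^b cos(m₁x) · cos(m₂βx) · cos(m₃(1+β)x) dx = 0. -/
open Real Filter

lemma lin_ne_zero (β : ℝ) (hβirr : Irrational β) (p q : ℤ) (h : ¬(p = 0 ∧ q = 0)) :
    (p : ℝ) + q * β ≠ 0 := by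
  intro heq
  rcases eq_or_ne q 0 with hq | hq
  · subst hq
    simp at heq
    exact h ⟨by exact_mod_cast heq, rfl⟩
  · have hq' : (q : ℝ) ≠ 0 := by exact_mod_cast hq
    have hb : β = ((-p / q : ℚ) : ℝ) := by
      push_cast
      field_simp
      linarith
    exact hβirr ⟨_, hb.symm⟩

lemma avg_cos (ω : ℝ) (hω : ω ≠ 0) :
    Tendsto (fun b : ℝ => (1 / b) * ∫ x in (0:ℝ)..b, Real.cos (ω * x)) atTop (nhds 0) := by
  have key : ∀ b : ℝ, (∫ x in (0:ℝ)..b, Real.cos (ω * x)) = Real.sin (ω * b) / ω := by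
    intro b
    rw [intervalIntegral.integral_comp_mul_left Real.cos hω]
    simp [integral_cos, div_eq_inv_mul]
  simp only [key]
  have hg : Tendsto (fun b : ℝ => (1 / b) * (1 / |ω|)) atTop (nhds 0) := by
    simpa using tendsto_inv_atTop_zero.mul_const (1 / |ω|)
  refine squeeze_zero_norm' ?_ hg
  · filter_upwards [eventually_ge_atTop (1:ℝ)] with b hb
    have hb0 : (0:ℝ) < b := lt_of_lt_of_le one_pos hb
    have h1 : |Real.sin (ω * b) / ω| ≤ 1 / |ω| := by
      rw [abs_div]
      gcongr
      exact Real.abs_sin_le_one _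
    rw [norm_mul, Real.norm_eq_abs, Real.norm_eq_abs, abs_of_pos (by positivity : (0:ℝ) < 1 / b)]
    gcongr

/-- If `β > 0` is irrational and `m₁, m₂, m₃` are natural numbers, not all equal, then the
time average of `cos(m₁x)cos(m₂βx)cos(m₃(1+β)x)` over `[0,b]` tends to `0` as `b → ∞`. -/
theorem average_triple_cosines_not_all_equal
    (β : ℝ) (hβpos : 0 < β) (hβirr : Irrational β)
    (m₁ m₂ m₃ : ℕ) (hne : ¬(m₁ = m₂ ∧ m₂ = m₃)) :
    Tendsto (fun b : ℝ =>
        (1 / b) * ∫ x in (0:ℝ)..b,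
          Real.cos (m₁ * x) * Real.cos (m₂ * β * x) * Real.cos (m₃ * (1 + β) * x))
      atTop (nhds 0) := by
  set ω₁ : ℝ := ((m₁:ℝ) + m₃) + ((m₂:ℝ) + m₃) * β with hω₁def
  set ω₂ : ℝ := ((m₁:ℝ) - m₃) + ((m₂:ℝ) - m₃) * β with hω₂def
  set ω₃ : ℝ := ((m₁:ℝ) + m₃) + ((m₃:ℝ) - m₂) * β with hω₃def
  set ω₄ : ℝ := ((m₁:ℝ) - m₃) + (-(m₂:ℝ) - m₃) * β with hω₄def
  have h1 : ω₁ ≠ 0 := by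
    have := lin_ne_zero β hβirr ((m₁:ℤ) + m₃) ((m₂:ℤ) + m₃) (by omega)
    rw [hω₁def]; push_cast at this ⊢; convert this using 2 <;> ring
  have h2 : ω₂ ≠ 0 := by
    have := lin_ne_zero β hβirr ((m₁:ℤ) - m₃) ((m₂:ℤ) - m₃) (by omega)
    rw [hω₂def]; push_cast at this ⊢; convert this using 2 <;> ring
  have h3 : ω₃ ≠ 0 := by
    have := lin_ne_zero β hβirr ((m₁:ℤ) + m₃) ((m₃:ℤ) - m₂) (by omega)
    rw [hω₃def]; push_cast at this ⊢; convert this using 2 <;> ring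
  have h4 : ω₄ ≠ 0 := by
    have := lin_ne_zero β hβirr ((m₁:ℤ) - m₃) (-(m₂:ℤ) - m₃) (by omega)
    rw [hω₄def]; push_cast at this ⊢; convert this using 2 <;> ring
  have hident : ∀ x : ℝ, Real.cos (m₁ * x) * Real.cos (m₂ * β * x) * Real.cos (m₃ * (1 + β) * x)
      = (Real.cos (ω₁ * x) + Real.cos (ω₂ * x) + Real.cos (ω₃ * x) + Real.cos (ω₄ * x)) / 4 := by
    intro x
    have e1 : ω₁ * x = (m₁ * x + m₂ * β * x) + m₃ * (1 + β) * x := by rw [hω₁def]; ring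
    have e2 : ω₂ * x = (m₁ * x + m₂ * β * x) - m₃ * (1 + β) * x := by rw [hω₂def]; ring
    have e3 : ω₃ * x = (m₁ * x - m₂ * β * x) + m₃ * (1 + β) * x := by rw [hω₃def]; ring
    have e4 : ω₄ * x = (m₁ * x - m₂ * β * x) - m₃ * (1 + β) * x := by rw [hω₄def]; ring
    rw [e1, e2, e3, e4]
    simp only [Real.cos_add, Real.cos_sub, Real.sin_add, Real.sin_sub]
    ring
  have hint : ∀ (ω b : ℝ), IntervalIntegrable (fun x => Real.cos (ω * x)) MeasureTheory.volume 0 b :=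
    fun ω b => (Real.continuous_cos.comp (continuous_const.mul continuous_id)).intervalIntegrable _ _
  have hfun : ∀ b : ℝ, (∫ x in (0:ℝ)..b,
      Real.cos (m₁ * x) * Real.cos (m₂ * β * x) * Real.cos (m₃ * (1 + β) * x))
      = ((∫ x in (0:ℝ)..b, Real.cos (ω₁ * x)) + (∫ x in (0:ℝ)..b, Real.cos (ω₂ * x))
        + (∫ x in (0:ℝ)..b, Real.cos (ω₃ * x)) + (∫ x in (0:ℝ)..b, Real.cos (ω₄ * x))) / 4 := by
    intro b
    simp only [hident]
    rw [intervalIntegral.integral_div,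
      intervalIntegral.integral_add (((hint ω₁ b).add (hint ω₂ b)).add (hint ω₃ b)) (hint ω₄ b),
      intervalIntegral.integral_add ((hint ω₁ b).add (hint ω₂ b)) (hint ω₃ b),
      intervalIntegral.integral_add (hint ω₁ b) (hint ω₂ b)]
  simp only [hfun]
  have hlim := (((avg_cos ω₁ h1).add (avg_cos ω₂ h2)).add (avg_cos ω₃ h3)).add (avg_cos ω₄ h4)
  have := hlim.div_const 4
  simp only [add_zero, zero_div] at this
  refine this.congr (fun b => ?_)
  ring
end

section
/- Let β > 0 be irrational and let m ≥ 1 be a natural number. Then lim_{b→∞} (1/b) ∫₀^b cos(mx) · cos(mβx) · cos(m(1+β)x) dx = 1/4. -/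
open Real Filter

lemma integral_cos_kx (k : ℝ) (hk : k ≠ 0) (b : ℝ) :
    ∫ x in (0:ℝ)..b, Real.cos (k * x) = Real.sin (k * b) / k := by
  rw [intervalIntegral.integral_comp_mul_left (fun x => Real.cos x) hk]
  simp [integral_cos, div_eq_inv_mul]

lemma cos_triple (a c : ℝ) :
    Real.cos a * Real.cos c * Real.cos (a + c) =
      1/4 + (Real.cos (2*a) + Real.cos (2*c) + Real.cos (2*a + 2*c)) / 4 := by
  have h1 := Real.sin_sq_add_cos_sq a
  have h2 := Real.sin_sq_add_cos_sq c
  rw [Real.cos_add, show (2*a + 2*c) = (2*a) + (2*c) by ring, Real.cos_add,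
    Real.cos_two_mul, Real.cos_two_mul, Real.sin_two_mul, Real.sin_two_mul]
  nlinarith [h1, h2]

/-- If `β > 0` is irrational and `m ≥ 1` is a natural number, then the time average of
`cos(mx)cos(mβx)cos(m(1+β)x)` over `[0,b]` tends to `1/4` as `b → ∞`. -/
theorem average_triple_cosines_all_equal
    (β : ℝ) (hβpos : 0 < β) (hβirr : Irrational β)
    (m : ℕ) (hm : 1 ≤ m) :
    Tendsto (fun b : ℝ =>
        (1 / b) * ∫ x in (0:ℝ)..b,
          Real.cos (m * x) * Real.cos (m * β * x) * Real.cos (m * (1 + β) * x))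
      atTop (nhds (1 / 4)) := by
  have hm0 : (m : ℝ) ≠ 0 := by positivity
  have hk1 : (2 * (m:ℝ)) ≠ 0 := by positivity
  have hk2 : (2 * (m:ℝ) * β) ≠ 0 := by positivity
  have hk3 : (2 * (m:ℝ) * (1 + β)) ≠ 0 := by positivity
  set S : ℝ → ℝ := fun b => Real.sin (2*m*b) / (2*m) + Real.sin (2*m*β*b) / (2*m*β)
      + Real.sin (2*m*(1+β)*b) / (2*m*(1+β)) with hS
  have hint : ∀ b : ℝ, (∫ x in (0:ℝ)..b,
      Real.cos (m * x) * Real.cos (m * β * x) * Real.cos (m * (1 + β) * x))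
      = b / 4 + S b / 4 := by
    intro b
    have heq : ∀ x : ℝ, Real.cos (m * x) * Real.cos (m * β * x) * Real.cos (m * (1 + β) * x)
        = 1/4 + ((1/4) * Real.cos (2*m*x) + (1/4) * Real.cos (2*m*β*x)
            + (1/4) * Real.cos (2*m*(1+β)*x)) := by
      intro x
      have := cos_triple (m * x) (m * β * x)
      rw [show (m:ℝ) * x + m * β * x = m * (1+β) * x by ring] at this
      rw [this]
      ring_nf
    have i1 : IntervalIntegrable (fun x => (1/4) * Real.cos (2*(m:ℝ)*x))
        MeasureTheory.volume 0 b :=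
      (by fun_prop : Continuous _).intervalIntegrable _ _
    have i2 : IntervalIntegrable (fun x => (1/4) * Real.cos (2*(m:ℝ)*β*x))
        MeasureTheory.volume 0 b :=
      (by fun_prop : Continuous _).intervalIntegrable _ _
    have i3 : IntervalIntegrable (fun x => (1/4) * Real.cos (2*(m:ℝ)*(1+β)*x))
        MeasureTheory.volume 0 b :=
      (by fun_prop : Continuous _).intervalIntegrable _ _
    rw [intervalIntegral.integral_congr (fun x _ => heq x),
      intervalIntegral.integral_add intervalIntegrable_const ((i1.add i2).add i3),
      intervalIntegral.integral_add (i1.add i2) i3,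
      intervalIntegral.integral_add i1 i2,
      intervalIntegral.integral_const_mul, intervalIntegral.integral_const_mul,
      intervalIntegral.integral_const_mul,
      integral_cos_kx _ hk1, integral_cos_kx _ hk2, integral_cos_kx _ hk3,
      intervalIntegral.integral_const]
    simp only [hS, smul_eq_mul, sub_zero]
    ring
  have hCb : ∀ b : ℝ, |S b| ≤ 1/|2*(m:ℝ)| + 1/|2*(m:ℝ)*β| + 1/|2*(m:ℝ)*(1+β)| := by
    intro b
    have h1 : |Real.sin (2*m*b) / (2*(m:ℝ))| ≤ 1/|2*(m:ℝ)| := by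
      rw [abs_div]; gcongr; exact Real.abs_sin_le_one _
    have h2 : |Real.sin (2*m*β*b) / (2*(m:ℝ)*β)| ≤ 1/|2*(m:ℝ)*β| := by
      rw [abs_div]; gcongr; exact Real.abs_sin_le_one _
    have h3 : |Real.sin (2*m*(1+β)*b) / (2*(m:ℝ)*(1+β))| ≤ 1/|2*(m:ℝ)*(1+β)| := by
      rw [abs_div]; gcongr; exact Real.abs_sin_le_one _
    calc |S b| ≤ |Real.sin (2*m*b) / (2*(m:ℝ))| + |Real.sin (2*m*β*b) / (2*(m:ℝ)*β)|
          + |Real.sin (2*m*(1+β)*b) / (2*(m:ℝ)*(1+β))| :=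
        (abs_add_le _ _).trans (by gcongr; exact abs_add_le _ _)
      _ ≤ _ := by gcongr
  set C : ℝ := 1/|2*(m:ℝ)| + 1/|2*(m:ℝ)*β| + 1/|2*(m:ℝ)*(1+β)| with hCdef
  have hz : Tendsto (fun b : ℝ => (1/b) * (S b / 4)) atTop (nhds 0) := by
    have hbound : ∀ b : ℝ, ‖(1/b) * (S b / 4)‖ ≤ |1/b| * (C/4) := by
      intro b
      have h4 : |S b / 4| ≤ C/4 := by
        rw [abs_div, show |(4:ℝ)| = 4 by norm_num]
        exact div_le_div_of_nonneg_right (hCb b) (by norm_num) |>.trans_eq rfl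
      rw [Real.norm_eq_abs, abs_mul]
      exact mul_le_mul_of_nonneg_left h4 (abs_nonneg _)
    have hlim : Tendsto (fun b : ℝ => |1/b| * (C/4)) atTop (nhds 0) := by
      have h1 : Tendsto (fun b : ℝ => |1/b|) atTop (nhds 0) := by
        have h0 : Tendsto (fun b : ℝ => b⁻¹) atTop (nhds 0) := tendsto_inv_atTop_zero
        simpa [one_div] using h0.abs
      simpa using h1.mul_const (C/4)
    exact squeeze_zero_norm hbound hlim
  have key : Tendsto (fun b : ℝ => 1/4 + (1/b) * (S b / 4)) atTop (nhds (1/4)) := by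
    simpa using tendsto_const_nhds.add hz
  apply key.congr'
  filter_upwards [eventually_gt_atTop (0:ℝ)] with b hb
  rw [hint b]
  field_simp
end
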